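/- arXiv:2604.21888 — 7 statements merged into one kernel-verified Lean document; each statement's English description precedes it below -/
import Mathlib

section
/- For every integer k ≥ 1 there exists N such that for all n ≥ N, the Kneser graph KG(Perm_n) of the permutohedron contains the kth power of a Hamiltonian cycle. -/
/-- The set `[k] = {1, …, k}` viewed inside `Fin n` (with `Fin n` representing
`{1, …, n}` via `i ↦ i + 1`): the first `k` elements. -/
def firstK (n k : ℕ) : Set (Fin n) := {i : Fin n | (i : ℕ) < k}

/-- The Kneser graph of the permutohedron: vertices are the permutations of
`{1, …, n}`, and `σ, τ` are adjacent iff there is no `k` with `1 ≤ k ≤ n - 1`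
such that `σ⁻¹([k]) = τ⁻¹([k])`. -/
def KGPerm (n : ℕ) : SimpleGraph (Equiv.Perm (Fin n)) where
  Adj σ τ := σ ≠ τ ∧
    ∀ k : ℕ, 1 ≤ k → k ≤ n - 1 → (⇑σ) ⁻¹' (firstK n k) ≠ (⇑τ) ⁻¹' (firstK n k)
  symm := ⟨fun σ τ h => ⟨h.1.symm, fun k hk1 hk2 => (h.2 k hk1 hk2).symm⟩⟩
  loopless := ⟨fun σ h => h.1 rfl⟩

/-- A graph `G` on `N` vertices contains the `k`-th power of a Hamiltonian cycle if
there is a cyclic enumeration of its vertices (a bijection `ZMod N ≃ V`) such that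
`v i` is adjacent to `v (i + j)` for all `i` and all `1 ≤ j ≤ k`. -/
def ContainsHamPower {V : Type*} (G : SimpleGraph V) (k : ℕ) : Prop :=
  ∃ v : ZMod (Nat.card V) ≃ V,
    ∀ (i : ZMod (Nat.card V)) (j : ℕ), 1 ≤ j → j ≤ k →
      G.Adj (v i) (v (i + (j : ZMod (Nat.card V))))

/-!
Write `n = N + 1`. List `Perm (Fin (N + 1))` in blocks of `N + 1`: block `q` consists of the
cyclic shifts `z ↦ π_q z - r` (`r = 0, …, N`) of a permutation `π_q` fixing `N`. The flag
`σ⁻¹([1]) ⊂ σ⁻¹([2]) ⊂ ⋯` of such a vertex is `π_q⁻¹` of the cyclic intervals starting at `r`,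
and an interval determines its starting point, so any two vertices of a block are adjacent.
If the `π_q` run through a Steinhaus–Johnson–Trotter listing of `Perm (Fin N)`, consecutive
ones differ by a transposition `(a a+1)` with `a + 1 < N`. Since `j ≤ k` steps lead from a
shift `r ≥ N + 1 - k` at the end of a block to a shift `r' < k` at the start of the next one,
and such a transposition cannot move both a neighbour of `r` and a neighbour of `r'` once
`N ≥ 2k + 1`, these vertices are adjacent as well.
-/
open Equiv Nat
open Fin.NatCast

theorem Nat.modEq_mul_iff_mod_eq_and_div_modEq {x y a b : ℕ} :
    x ≡ y [MOD a * b] ↔ x % a = y % a ∧ x / a ≡ y / a [MOD b] := by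
  refine ⟨fun h => ⟨?_, ?_⟩, fun ⟨h₁, h₂⟩ => ?_⟩
  · rw [← Nat.mod_mul_right_mod x a b, h, Nat.mod_mul_right_mod]
  · unfold Nat.ModEq
    rw [← Nat.mod_mul_right_div_self, h, Nat.mod_mul_right_div_self]
  · unfold Nat.ModEq
    rw [Nat.mod_mul, Nat.mod_mul, h₁, h₂]

theorem Nat.ModEq.even_iff {x y n : ℕ} (h : x ≡ y [MOD n]) (hn : 2 ∣ n) : Even x ↔ Even y := by
  rw [Nat.even_iff, Nat.even_iff, h.of_dvd hn]

theorem containsHamPower_of_seq {V : Type*} [Finite V] (G : SimpleGraph V) (k : ℕ)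
    (f : ℕ → V) (hf : ∀ x y, f x = f y ↔ x ≡ y [MOD Nat.card V])
    (hadj : ∀ t j, 1 ≤ j → j ≤ k → G.Adj (f t) (f (t + j))) : ContainsHamPower G k := by
  have : Nonempty V := ⟨f 0⟩
  have : NeZero (Nat.card V) := ⟨Nat.card_ne_zero.mpr ⟨inferInstance, inferInstance⟩⟩
  have hinj : Function.Injective fun i : ZMod (Nat.card V) => f i.val := fun i i' h =>
    ZMod.val_injective _ (Nat.ModEq.eq_of_lt_of_lt ((hf _ _).mp h) i.val_lt i'.val_lt)
  have : Fintype V := Fintype.ofFinite V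
  have hbij : Function.Bijective fun i : ZMod (Nat.card V) => f i.val := by
    refine (Fintype.bijective_iff_injective_and_card _).mpr ⟨hinj, ?_⟩
    rw [ZMod.card, Nat.card_eq_fintype_card]
  refine ⟨Equiv.ofBijective _ hbij, fun i j hj hjk => ?_⟩
  have hval : f (i + (j : ZMod (Nat.card V))).val = f (i.val + j) := by
    rw [hf, ZMod.val_add, ZMod.val_natCast]
    exact (Nat.mod_modEq _ _).trans (Nat.ModEq.add_left _ (Nat.mod_modEq _ _))
  simpa only [Equiv.ofBijective_apply, hval] using hadj i.val j hj hjk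

section BlockSeq

variable {α : Type*} {a : ℕ} {g : ℕ → ℕ → α}

def blockSeq (a : ℕ) (g : ℕ → ℕ → α) (t : ℕ) : α := g (t / a) (t % a)

theorem blockSeq_eq_iff {b : ℕ} (ha : 0 < a)
    (hg : ∀ q q' r r', r < a → r' < a → (g q r = g q' r' ↔ q ≡ q' [MOD b] ∧ r = r'))
    (x y : ℕ) : blockSeq a g x = blockSeq a g y ↔ x ≡ y [MOD a * b] := by
  rw [Nat.modEq_mul_iff_mod_eq_and_div_modEq, blockSeq, blockSeq,
    hg _ _ _ _ (Nat.mod_lt x ha) (Nat.mod_lt y ha), and_comm]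

theorem blockSeq_add_of_lt {t j : ℕ} (h : t % a + j < a) :
    blockSeq a g (t + j) = g (t / a) (t % a + j) := by
  have ht : t + j = (t % a + j) + a * (t / a) := by linarith [Nat.div_add_mod t a]
  rw [blockSeq, ht, Nat.add_mul_div_left _ _ (by omega), Nat.div_eq_of_lt h, zero_add,
    Nat.add_mul_mod_self_left, Nat.mod_eq_of_lt h]

theorem blockSeq_add_of_le {t j : ℕ} (ha : 0 < a) (hj : j ≤ a) (h : a ≤ t % a + j) :
    blockSeq a g (t + j) = g (t / a + 1) (t % a + j - a) := by
  have hlt : t % a + j - a < a := by have := Nat.mod_lt t ha; omega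
  have ht : t + j = (t % a + j - a) + a * (t / a + 1) := by
    have := Nat.div_add_mod t a
    rw [Nat.mul_add_one]
    omega
  rw [blockSeq, ht, Nat.add_mul_div_left _ _ ha, Nat.div_eq_of_lt hlt, zero_add,
    Nat.add_mul_mod_self_left, Nat.mod_eq_of_lt hlt]

end BlockSeq

theorem Equiv.Perm.viaEmbedding_swap {α β : Type*} [DecidableEq α] [DecidableEq β]
    (ι : α ↪ β) (a b : α) : (swap a b).viaEmbedding ι = swap (ι a) (ι b) := by
  ext z
  by_cases hz : z ∈ Set.range ι
  · obtain ⟨x, rfl⟩ := hz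
    rw [Perm.viaEmbedding_apply, ι.injective.swap_apply]
  · have hne : ∀ x, z ≠ ι x := fun x h => hz ⟨x, h.symm⟩
    rw [Perm.viaEmbedding_apply_of_notMem _ _ _ hz, swap_apply_of_ne_of_ne (hne a) (hne b)]

theorem Fin.cycleRange_mul_swap {n : ℕ} {i j : Fin (n + 1)} (h : (j : ℕ) = i + 1) :
    cycleRange i * swap i j = cycleRange j := by
  have hij : i < j := by rw [Fin.lt_def]; omega
  ext z
  rw [Perm.mul_apply]
  rcases eq_or_ne z i with rfl | hzi
  · rw [swap_apply_left, cycleRange_of_gt hij, cycleRange_of_lt hij]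
    exact h.trans (Fin.val_add_one_of_lt (hij.trans_le (Fin.le_last _))).symm
  rcases eq_or_ne z j with rfl | hzj
  · rw [swap_apply_right, cycleRange_self, cycleRange_self]
  rw [swap_apply_of_ne_of_ne hzi hzj]
  rcases lt_or_gt_of_ne hzi with hz | hz
  · rw [cycleRange_of_lt hz, cycleRange_of_lt (hz.trans hij)]
  · have hz' : j < z := by rw [Fin.lt_def] at hz ⊢; have := Fin.val_ne_of_ne hzj; omega
    rw [cycleRange_of_gt hz, cycleRange_of_gt hz']

theorem Fin.cycleRange_inv_eq_swap_mul {n : ℕ} {i j : Fin (n + 1)} (h : (j : ℕ) = i + 1) :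
    (cycleRange j)⁻¹ = swap i j * (cycleRange i)⁻¹ := by
  rw [← cycleRange_mul_swap h, mul_inv_rev, swap_inv]

structure IsAdjSwapCycle {m : ℕ} (W : ℕ → Perm (Fin m)) : Prop where
  eq_iff_modEq : ∀ x y, W x = W y ↔ x ≡ y [MOD m !]
  exists_swap : ∀ t, ∃ a b : Fin m, (b : ℕ) = a + 1 ∧ W (t + 1) = swap a b * W t

theorem isAdjSwapCycle_two : IsAdjSwapCycle fun t => swap (0 : Fin 2) 1 ^ t where
  eq_iff_modEq x y := by
    rw [pow_eq_pow_iff_modEq, Perm.IsSwap.orderOf ⟨0, 1, by decide, rfl⟩]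
    rfl
  exists_swap t := ⟨0, 1, rfl, pow_succ' _ _⟩

namespace IsAdjSwapCycle

variable {m : ℕ} {W : ℕ → Perm (Fin m)}

local notation "succLift" => Perm.viaEmbeddingHom (Fin.succEmb m)

/-- Block `q` of the Steinhaus–Johnson–Trotter listing of `Perm (Fin (m + 1))`: its entries
send `0` to `p`, where `p` runs up through `0, …, m` for even `q` and down for odd `q`, so that
`p` stays put (at `m` or at `0`) when `q` changes. -/
noncomputable def sjtBlock (W : ℕ → Perm (Fin m)) (q r : ℕ) : Perm (Fin (m + 1)) :=
  (Fin.cycleRange ((if Even q then r else m - r : ℕ) : Fin (m + 1)))⁻¹ * succLift (W q)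

theorem sjtBlock_apply_zero (W : ℕ → Perm (Fin m)) (q r : ℕ) :
    sjtBlock W q r 0 = ((if Even q then r else m - r : ℕ) : Fin (m + 1)) := by
  rw [sjtBlock, Perm.mul_apply, Perm.viaEmbeddingHom_apply,
    Perm.viaEmbedding_apply_of_notMem _ _ _ (by simp), Perm.inv_def,
    Fin.cycleRange_symm_zero]

theorem sjtBlock_eq_iff (hW : IsAdjSwapCycle W) (hm : 2 ≤ m) {q q' r r' : ℕ} (hr : r < m + 1)
    (hr' : r' < m + 1) : sjtBlock W q r = sjtBlock W q' r' ↔ q ≡ q' [MOD m !] ∧ r = r' := by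
  have hpar : q ≡ q' [MOD m !] → (Even q ↔ Even q') := fun h =>
    h.even_iff (Nat.dvd_factorial two_pos hm)
  constructor
  · intro h
    have hp := DFunLike.congr_fun h 0
    rw [sjtBlock_apply_zero, sjtBlock_apply_zero] at hp
    rw [sjtBlock, sjtBlock, hp] at h
    have hq := (hW.eq_iff_modEq q q').mp (Perm.viaEmbeddingHom_injective _ (mul_left_cancel h))
    refine ⟨hq, ?_⟩
    have hp' := congrArg Fin.val hp
    rw [Fin.val_cast_of_lt (by split_ifs <;> omega),
      Fin.val_cast_of_lt (by split_ifs <;> omega)] at hp'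
    by_cases hq₁ : Even q
    · rwa [if_pos hq₁, if_pos ((hpar hq).mp hq₁)] at hp'
    · rw [if_neg hq₁, if_neg (mt (hpar hq).mpr hq₁)] at hp'
      omega
  · rintro ⟨hq, rfl⟩
    simp only [sjtBlock, (hW.eq_iff_modEq q q').mpr hq, hpar hq]

theorem sjtBlock_succ_offset (W : ℕ → Perm (Fin m)) (q : ℕ) {r : ℕ} (hr : r < m) :
    ∃ a b : Fin (m + 1), (b : ℕ) = a + 1 ∧ sjtBlock W q (r + 1) = swap a b * sjtBlock W q r := by
  unfold sjtBlock
  split_ifs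
  · have hab : (((r + 1 : ℕ) : Fin (m + 1)) : ℕ) = ((r : ℕ) : Fin (m + 1)) + 1 := by
      rw [Fin.val_cast_of_lt (show r + 1 < m + 1 by omega),
        Fin.val_cast_of_lt (show r < m + 1 by omega)]
    refine ⟨r, (r + 1 : ℕ), hab, ?_⟩
    rw [Fin.cycleRange_inv_eq_swap_mul hab, mul_assoc]
  · have hab : (((m - r : ℕ) : Fin (m + 1)) : ℕ) = ((m - (r + 1) : ℕ) : Fin (m + 1)) + 1 := by
      rw [Fin.val_cast_of_lt (show m - r < m + 1 by omega),
        Fin.val_cast_of_lt (show m - (r + 1) < m + 1 by omega)]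
      omega
    refine ⟨(m - (r + 1) : ℕ), (m - r : ℕ), hab, ?_⟩
    rw [Fin.cycleRange_inv_eq_swap_mul hab, mul_assoc, swap_mul_self_mul]

theorem sjtBlock_succ_block (hW : IsAdjSwapCycle W) (q : ℕ) :
    ∃ a b : Fin (m + 1), (b : ℕ) = a + 1 ∧ sjtBlock W (q + 1) 0 = swap a b * sjtBlock W q m := by
  obtain ⟨a, b, hab, hstep⟩ := hW.exists_swap q
  unfold sjtBlock
  rw [hstep, map_mul, Perm.viaEmbeddingHom_apply, Perm.viaEmbedding_swap]
  by_cases hq : Even q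
  · rw [if_neg (Nat.not_even_iff_odd.mpr hq.add_one), if_pos hq, Nat.sub_zero,
      Fin.natCast_eq_last]
    refine ⟨a.castSucc, b.castSucc, hab, ?_⟩
    have hconj : swap a.castSucc b.castSucc =
        (Fin.last m).cycleRange⁻¹ * swap a.succ b.succ * (Fin.last m).cycleRange⁻¹⁻¹ := by
      rw [← swap_apply_apply, Perm.inv_def, Fin.cycleRange_symm_succ, Fin.cycleRange_symm_succ,
        Fin.succAbove_last]
    rw [hconj]
    simp [mul_assoc]
  · rw [if_pos (Nat.even_add_one.mpr hq), if_neg hq, Nat.sub_self, Nat.cast_zero,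
      Fin.cycleRange_zero, inv_one, one_mul, one_mul]
    exact ⟨a.succ, b.succ, by simp [hab], rfl⟩

theorem blockSeq_sjtBlock (hW : IsAdjSwapCycle W) (hm : 2 ≤ m) :
    IsAdjSwapCycle (blockSeq (m + 1) (sjtBlock W)) where
  eq_iff_modEq := by
    rw [Nat.factorial_succ]
    exact blockSeq_eq_iff m.succ_pos fun q q' r r' hr hr' => sjtBlock_eq_iff hW hm hr hr'
  exists_swap t := by
    have hm₁ : 0 < m + 1 := m.succ_pos
    have hr : t % (m + 1) ≤ m := Nat.le_of_lt_succ (Nat.mod_lt t hm₁)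
    rcases hr.lt_or_eq with hr | hr
    · rw [blockSeq_add_of_lt (by omega)]
      exact sjtBlock_succ_offset W _ hr
    · rw [blockSeq_add_of_le hm₁ (by omega) (by omega), blockSeq, hr, Nat.sub_self]
      exact sjtBlock_succ_block hW _

end IsAdjSwapCycle

theorem exists_isAdjSwapCycle {m : ℕ} (hm : 2 ≤ m) : ∃ W : ℕ → Perm (Fin m), IsAdjSwapCycle W := by
  induction m, hm using Nat.le_induction with
  | base => exact ⟨_, isAdjSwapCycle_two⟩
  | succ m hm ih =>
    obtain ⟨W, hW⟩ := ih
    exact ⟨_, hW.blockSeq_sjtBlock hm⟩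

theorem kgPerm_adj_of_forall_preimage_ne {n : ℕ} {σ τ : Perm (Fin n)} (hn : 2 ≤ n)
    (h : ∀ m, 1 ≤ m → m ≤ n - 1 → ⇑σ ⁻¹' firstK n m ≠ ⇑τ ⁻¹' firstK n m) :
    (KGPerm n).Adj σ τ :=
  ⟨fun hστ => h 1 le_rfl (by omega) (by rw [hστ]), h⟩

section CyclicInterval

variable {n m : ℕ}

/-- The `m` consecutive points `s, s + 1, …, s + m - 1` of `Fin (n + 1)`, read cyclically. -/
def cyclicInterval (s : Fin (n + 1)) (m : ℕ) : Set (Fin (n + 1)) :=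
  {z | ((z - s : Fin (n + 1)) : ℕ) < m}

theorem mem_cyclicInterval_and_sub_one_notMem_iff (hm : 0 < m) (hmn : m ≤ n)
    {s x : Fin (n + 1)} : x ∈ cyclicInterval s m ∧ x - 1 ∉ cyclicInterval s m ↔ x = s := by
  simp only [cyclicInterval, Set.mem_ofPred_eq]
  rw [sub_right_comm, Fin.coe_sub_one, ← sub_eq_zero (a := x)]
  rcases eq_or_ne (x - s) 0 with h | h
  · simp [h, hm, hmn]
  · have := Fin.pos_iff_ne_zero.mpr h
    simp only [h, if_false, iff_false, not_and, not_not]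
    omega

theorem cyclicInterval_injective (hm : 0 < m) (hmn : m ≤ n) {s s' : Fin (n + 1)}
    (h : cyclicInterval s m = cyclicInterval s' m) : s = s' :=
  (mem_cyclicInterval_and_sub_one_notMem_iff hm hmn).mp
    (h ▸ (mem_cyclicInterval_and_sub_one_notMem_iff hm hmn).mpr rfl)

theorem eq_of_cyclicInterval_eq_preimage (hm : 0 < m) (hmn : m ≤ n) {s s' : Fin (n + 1)}
    {p : Perm (Fin (n + 1))} (h : cyclicInterval s m = p ⁻¹' cyclicInterval s' m)
    (hp₁ : p (s - 1) = s - 1) (hp : p s = s) : s = s' := by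
  have hs := (mem_cyclicInterval_and_sub_one_notMem_iff hm hmn (s := s)).mpr rfl
  rw [h] at hs
  simp only [Set.mem_preimage, hp, hp₁] at hs
  exact (mem_cyclicInterval_and_sub_one_notMem_iff hm hmn).mp hs

/-- An interval starting in `[n + 1 - k, n]` cannot be carried to one starting in `[0, k)` by a
transposition `(a a+1)` that fixes `n`: such a transposition would have to move `s - 1` or `s`
for both starting points `s`, and these lie too far apart. -/
theorem cyclicInterval_ne_swap_preimage {k : ℕ} (hn : 2 * k + 1 ≤ n) (hm : 0 < m) (hmn : m ≤ n)
    {r r' a b : Fin (n + 1)} (hr : n + 1 ≤ r + k) (hr' : (r' : ℕ) < k)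
    (hab : (b : ℕ) = a + 1) (hb : (b : ℕ) < n) :
    cyclicInterval r m ≠ swap a b ⁻¹' cyclicInterval r' m := by
  intro h
  have h' : cyclicInterval r' m = swap a b ⁻¹' cyclicInterval r m := by
    ext z; simp [h, swap_apply_self]
  have moved : ∀ {s s' : Fin (n + 1)}, cyclicInterval s m = swap a b ⁻¹' cyclicInterval s' m →
      s ≠ s' → s - 1 = a ∨ s - 1 = b ∨ s = a ∨ s = b := by
    intro s s' hs hne
    by_contra hc
    push Not at hc
    exact hne (eq_of_cyclicInterval_eq_preimage hm hmn hs (swap_apply_of_ne_of_ne hc.1 hc.2.1)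
      (swap_apply_of_ne_of_ne hc.2.2.1 hc.2.2.2))
  have hne : r ≠ r' := by rintro rfl; omega
  have h₁ := moved h hne
  have h₂ := moved h' hne.symm
  simp only [Fin.ext_iff, Fin.coe_sub_one, Fin.val_zero] at h₁ h₂
  split_ifs at h₁ h₂ <;> omega

end CyclicInterval

section RotationBlocks

variable {N : ℕ} {W : ℕ → Perm (Fin N)}

local notation "castSuccLift" => Perm.viaEmbeddingHom (Fin.castSuccEmb (n := N))

noncomputable def rotBlock (W : ℕ → Perm (Fin N)) (q r : ℕ) : Perm (Fin (N + 1)) :=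
  (Equiv.subRight (r : Fin (N + 1)) : Perm (Fin (N + 1))) * castSuccLift (W q)

theorem rotBlock_preimage_firstK (W : ℕ → Perm (Fin N)) (q r m : ℕ) :
    ⇑(rotBlock W q r) ⁻¹' firstK (N + 1) m =
      ⇑(castSuccLift (W q)) ⁻¹' cyclicInterval (r : Fin (N + 1)) m := by
  rw [rotBlock, Perm.coe_mul, Set.preimage_comp]
  rfl

theorem rotBlock_eq_iff (hW : IsAdjSwapCycle W) {q q' r r' : ℕ} (hr : r < N + 1)
    (hr' : r' < N + 1) : rotBlock W q r = rotBlock W q' r' ↔ q ≡ q' [MOD N !] ∧ r = r' := by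
  constructor
  · intro h
    have hlast : ∀ σ : Perm (Fin N), castSuccLift σ (Fin.last N) = Fin.last N := fun σ =>
      Perm.viaEmbedding_apply_of_notMem _ _ _ (by simp)
    have hcast : Fin.last N - (r : Fin (N + 1)) = Fin.last N - r' := by
      simpa [rotBlock, hlast] using DFunLike.congr_fun h (Fin.last N)
    have hrr : r = r' := by
      simpa [Fin.val_cast_of_lt hr, Fin.val_cast_of_lt hr'] using
        congrArg Fin.val (sub_right_inj.mp hcast)
    subst hrr
    exact ⟨(hW.eq_iff_modEq q q').mp (Perm.viaEmbeddingHom_injective _ (mul_left_cancel h)), rfl⟩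
  · rintro ⟨hq, rfl⟩
    rw [rotBlock, rotBlock, (hW.eq_iff_modEq q q').mpr hq]

theorem rotBlock_adj_of_ne (hN : 1 ≤ N) (q : ℕ) {r r' : ℕ} (hr : r < N + 1) (hr' : r' < N + 1)
    (hne : r ≠ r') : (KGPerm (N + 1)).Adj (rotBlock W q r) (rotBlock W q r') := by
  refine kgPerm_adj_of_forall_preimage_ne (by omega) fun m hm hmN h => hne ?_
  rw [rotBlock_preimage_firstK, rotBlock_preimage_firstK] at h
  have hrr := cyclicInterval_injective hm (by omega)
    (Set.preimage_injective.mpr (castSuccLift (W q)).surjective h)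
  simpa [Fin.val_cast_of_lt hr, Fin.val_cast_of_lt hr'] using congrArg Fin.val hrr

theorem rotBlock_adj_succ (hW : IsAdjSwapCycle W) {k : ℕ} (hN : 2 * k + 1 ≤ N) (q : ℕ)
    {r r' : ℕ} (hr : r < N + 1) (hrk : N + 1 ≤ r + k) (hr' : r' < k) :
    (KGPerm (N + 1)).Adj (rotBlock W q r) (rotBlock W (q + 1) r') := by
  obtain ⟨a, b, hab, hstep⟩ := hW.exists_swap q
  refine kgPerm_adj_of_forall_preimage_ne (by omega) fun m hm hmN h => ?_
  rw [rotBlock_preimage_firstK, rotBlock_preimage_firstK, hstep, map_mul, Perm.coe_mul,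
    Set.preimage_comp, Perm.viaEmbeddingHom_apply (swap a b), Perm.viaEmbedding_swap] at h
  refine cyclicInterval_ne_swap_preimage hN hm (by omega) ?_ ?_ (by simpa using hab) (by simp)
    (Set.preimage_injective.mpr (castSuccLift (W q)).surjective h)
  · rwa [Fin.val_cast_of_lt hr]
  · rwa [Fin.val_cast_of_lt (by omega)]

end RotationBlocks

theorem kg_permutohedron_ham_power_general (k : ℕ) :
    ∃ N : ℕ, ∀ n : ℕ, N ≤ n → ContainsHamPower (KGPerm n) k := by
  refine ⟨2 * k + 3, fun n hn => ?_⟩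
  obtain ⟨N, rfl⟩ : ∃ N, n = N + 1 := ⟨n - 1, by omega⟩
  obtain ⟨W, hW⟩ := exists_isAdjSwapCycle (m := N) (by omega)
  have hN : 0 < N + 1 := N.succ_pos
  refine containsHamPower_of_seq _ k (blockSeq (N + 1) (rotBlock W)) (fun x y => ?_)
    fun t j hj hjk => ?_
  · rw [Nat.card_perm, Nat.card_fin, Nat.factorial_succ]
    exact blockSeq_eq_iff hN (fun q q' r r' hr hr' => rotBlock_eq_iff hW hr hr') x y
  · have hr := Nat.mod_lt t hN
    by_cases h : t % (N + 1) + j < N + 1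
    · rw [blockSeq_add_of_lt h]
      exact rotBlock_adj_of_ne (by omega) _ hr h (by omega)
    · rw [blockSeq_add_of_le hN (by omega) (by omega)]
      exact rotBlock_adj_succ hW (k := k) (by omega) _ hr (by omega) (by omega)

/-- For every `k ≥ 1` there is an `N` such that for all `n ≥ N`, the Kneser graph
of the permutohedron contains the `k`-th power of a Hamiltonian cycle. -/
theorem kg_permutohedron_ham_power (k : ℕ) (hk : 1 ≤ k) :
    ∃ N : ℕ, ∀ n : ℕ, N ≤ n → ContainsHamPower (KGPerm n) k :=
  kg_permutohedron_ham_power_general k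
end

section
/- Let n ≥ 4 and let O be a rotation orbit of triangulations of the n-gon. Then O has size exactly 2 if and only if n ∈ {4,6} and every triangulation in O consists only of ears, i.e., every diagonal of every triangulation in O has the form {i, i+2} (mod n). -/
/-- `x` lies strictly between `a` and `b` in the cyclic (clockwise) order on `ZMod n`. -/
def NgonBtw (n : ℕ) (a x b : ZMod n) : Prop :=
  0 < (x - a).val ∧ (x - a).val < (b - a).val

/-- Two unordered pairs of vertices of the `n`-gon cross: they have representations
`{a,b}` and `{c,d}` with `c` strictly inside one open arc determined by `a, b`
and `d` strictly inside the other. -/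
def NgonCross (n : ℕ) (e f : Sym2 (ZMod n)) : Prop :=
  ∃ a b c d : ZMod n, e = s(a, b) ∧ f = s(c, d) ∧
    NgonBtw n a c b ∧ NgonBtw n b d a

/-- A diagonal of the convex `n`-gon: an unordered pair `{i,j}` with
`i - j` not congruent to `0`, `1` or `-1` modulo `n`. -/
def IsDiagonal (n : ℕ) (e : Sym2 (ZMod n)) : Prop :=
  ∃ i j : ZMod n, e = s(i, j) ∧ i - j ≠ 0 ∧ i - j ≠ 1 ∧ i - j ≠ -1

/-- A triangulation of the convex `n`-gon: a set of `n - 3` pairwise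
noncrossing diagonals. -/
def IsTriangulation (n : ℕ) (T : Finset (Sym2 (ZMod n))) : Prop :=
  T.card = n - 3 ∧ (∀ e ∈ T, IsDiagonal n e) ∧
    ∀ e ∈ T, ∀ f ∈ T, ¬ NgonCross n e f

/-- Clockwise rotation of a diagonal: `{i,j} ↦ {i+1, j+1}`. -/
def rotDiag (n : ℕ) (e : Sym2 (ZMod n)) : Sym2 (ZMod n) :=
  e.map (· + 1)

/-- Inverse rotation of a diagonal: `{i,j} ↦ {i-1, j-1}`. -/
def rotInvDiag (n : ℕ) (e : Sym2 (ZMod n)) : Sym2 (ZMod n) :=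
  e.map (· - 1)

/-- Clockwise rotation of a triangulation. -/
def rotTri (n : ℕ) (T : Finset (Sym2 (ZMod n))) : Finset (Sym2 (ZMod n)) :=
  T.image (rotDiag n)

/-- Inverse rotation of a triangulation. -/
def rotInvTri (n : ℕ) (T : Finset (Sym2 (ZMod n))) : Finset (Sym2 (ZMod n)) :=
  T.image (rotInvDiag n)

/-- The rotation orbit of a triangulation. -/
def rotOrbit (n : ℕ) (T : Finset (Sym2 (ZMod n))) : Set (Finset (Sym2 (ZMod n))) :=
  {S | ∃ k : ℕ, S = (rotTri n)^[k] T}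

/-- The type of triangulations of the convex `n`-gon. -/
abbrev Triangulation (n : ℕ) : Type := {T : Finset (Sym2 (ZMod n)) // IsTriangulation n T}

/-- The Kneser graph of triangulations of the convex `n`-gon: two triangulations
are adjacent iff they are distinct and share no diagonal. -/
def KGTri (n : ℕ) : SimpleGraph (Triangulation n) where
  Adj T T' := T ≠ T' ∧ Disjoint T.1 T'.1
  symm := ⟨fun T T' h => ⟨h.1.symm, h.2.symm⟩⟩
  loopless := ⟨fun T h => h.1 rfl⟩

noncomputable instance (n : ℕ) [NeZero n] : Fintype (Triangulation n) :=
  Fintype.ofFinite _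

/-- An ear: a diagonal of the form `{i, i+2}` (mod `n`). -/
def IsEar (n : ℕ) (e : Sym2 (ZMod n)) : Prop :=
  ∃ i : ZMod n, e = s(i, i + 2)

/-!
Rotation is injective, so the orbit of `T` has two elements iff `r T ≠ T` and `r² T = T`.
If `r² T = T`, a diagonal `{i, i + k}` with `3 ≤ k ≤ n - 3` would cross its image
`{i + 2, i + k + 2}`, so `T` consists of ears. The ears `{i, i + 2}` and `{i + 1, i + 3}` cross,
so the set `J` of bases of the ears of `T` is disjoint from `J + 1`, whence `2 (n - 3) ≤ n`;
and `J` is closed under `+ 2`, which for `n = 5` puts `i + 1` in `J`. Conversely, for `n = 6`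
the three bases fill half of `ZMod 6`, so `J + 1` is the complement of `J` and `J + 2 = J`;
for `n = 4`, `r²` fixes every ear.
-/

theorem ncard_setOf_iterate_eq_two_iff {α : Type*} {f : α → α} (hf : Function.Injective f)
    (x : α) : {y | ∃ k : ℕ, y = f^[k] x}.ncard = 2 ↔ f x ≠ x ∧ f (f x) = x := by
  constructor
  · intro h
    have hfix : f x ≠ x := by
      intro hx
      have : {y | ∃ k : ℕ, y = f^[k] x} = {x} := by
        ext y
        refine ⟨fun ⟨k, hk⟩ => hk.trans (Function.iterate_fixed hx k), fun hy => ⟨0, hy⟩⟩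
      simp [this] at h
    refine ⟨hfix, by_contra fun h2 => ?_⟩
    have hsub : {x, f x, f (f x)} ⊆ {y | ∃ k : ℕ, y = f^[k] x} := by
      rintro y (rfl | rfl | rfl)
      exacts [⟨0, rfl⟩, ⟨1, rfl⟩, ⟨2, rfl⟩]
    have h3 : ({x, f x, f (f x)} : Set α).ncard = 3 :=
      Set.ncard_eq_three.mpr ⟨_, _, _, hfix.symm, Ne.symm h2, fun h => hfix (hf h).symm, rfl⟩
    have := Set.ncard_le_ncard hsub (Set.finite_of_ncard_ne_zero (by omega))
    omega
  · rintro ⟨hfix, h2⟩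
    have hper : Function.IsPeriodicPt f 2 x := h2
    have : {y | ∃ k : ℕ, y = f^[k] x} = {x, f x} := by
      ext y
      constructor
      · rintro ⟨k, rfl⟩
        rw [← hper.iterate_mod_apply]
        rcases Nat.mod_two_eq_zero_or_one k with h | h <;> simp [h]
      · rintro (rfl | rfl)
        exacts [⟨0, rfl⟩, ⟨1, rfl⟩]
    rw [this, Set.ncard_pair hfix.symm]

theorem rotDiag_mk (n : ℕ) (a b : ZMod n) : rotDiag n s(a, b) = s(a + 1, b + 1) := rfl

theorem rotDiag_injective (n : ℕ) : Function.Injective (rotDiag n) :=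
  Sym2.map.injective (add_left_injective 1)

theorem rotTri_injective (n : ℕ) : Function.Injective (rotTri n) :=
  Finset.image_injective (rotDiag_injective n)

theorem ncard_rotOrbit_eq_two_iff (n : ℕ) (T : Finset (Sym2 (ZMod n))) :
    (rotOrbit n T).ncard = 2 ↔ rotTri n T ≠ T ∧ rotTri n (rotTri n T) = T :=
  ncard_setOf_iterate_eq_two_iff (rotTri_injective n) T

theorem rotTri_rotTri (n : ℕ) (T : Finset (Sym2 (ZMod n))) :
    rotTri n (rotTri n T) = T.image (Sym2.map (· + 2)) := by
  rw [rotTri, rotTri, Finset.image_image]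
  congr 1
  ext e
  simp [rotDiag, Sym2.map_map, add_assoc, one_add_one_eq_two]

theorem mk_add_two_mem_of_rotTri_rotTri_eq {n : ℕ} {T : Finset (Sym2 (ZMod n))}
    (h2 : rotTri n (rotTri n T) = T) {a b : ZMod n} (h : s(a, b) ∈ T) : s(a + 2, b + 2) ∈ T := by
  rw [← h2, rotTri_rotTri]
  exact Finset.mem_image_of_mem _ h

theorem IsEar.rotDiag {n : ℕ} {e : Sym2 (ZMod n)} (he : IsEar n e) : IsEar n (rotDiag n e) := by
  obtain ⟨i, rfl⟩ := he
  exact ⟨i + 1, by rw [rotDiag_mk, add_right_comm]⟩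

theorem isEar_of_mem_rotOrbit {n : ℕ} {T S : Finset (Sym2 (ZMod n))}
    (hT : ∀ e ∈ T, IsEar n e) (hS : S ∈ rotOrbit n T) : ∀ e ∈ S, IsEar n e := by
  obtain ⟨k, rfl⟩ := hS
  induction k with
  | zero => exact hT
  | succ k ih =>
    rw [Function.iterate_succ_apply']
    rintro _ he
    obtain ⟨e, heT, rfl⟩ := Finset.mem_image.mp he
    exact (ih e heT).rotDiag

theorem ZMod.val_two_of_lt {n : ℕ} (hn : 2 < n) : (2 : ZMod n).val = 2 := by
  rw [ZMod.val_two_eq_two_mod, Nat.mod_eq_of_lt hn]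

theorem ngonCross_mk_add {n : ℕ} (i a b : ZMod n) (hb : 0 < b.val) (hba : b.val < a.val)
    (hab : a.val + b.val < n) : NgonCross n s(i, i + a) s(i + b, i + a + b) := by
  have : NeZero n := ⟨by omega⟩
  have ha : a ≠ 0 := by rintro rfl; simp at hba
  refine ⟨i, i + a, i + b, i + a + b, rfl, rfl, ⟨?_, ?_⟩, ⟨?_, ?_⟩⟩ <;>
    simp only [add_sub_cancel_left, sub_add_cancel_left, ZMod.neg_val, if_neg ha] <;> omega

theorem ngonCross_ear_ear_add_one {n : ℕ} (hn : 4 ≤ n) (i : ZMod n) :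
    NgonCross n s(i, i + 2) s(i + 1, i + 1 + 2) := by
  have : Fact (1 < n) := ⟨by omega⟩
  rw [add_right_comm]
  apply ngonCross_mk_add <;> simp only [ZMod.val_one, ZMod.val_two_of_lt (show 2 < n by omega)] <;>
    omega

theorem isEar_of_rotTri_rotTri_eq {n : ℕ} (hn : 4 ≤ n) {T : Finset (Sym2 (ZMod n))}
    (hdiag : ∀ e ∈ T, IsDiagonal n e) (hnc : ∀ e ∈ T, ∀ f ∈ T, ¬ NgonCross n e f)
    (h2 : rotTri n (rotTri n T) = T) : ∀ e ∈ T, IsEar n e := by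
  have : NeZero n := ⟨by omega⟩
  have : Fact (1 < n) := ⟨by omega⟩
  have hval2 := ZMod.val_two_of_lt (show 2 < n by omega)
  intro e he
  obtain ⟨i, j, rfl, h0, h1, hm1⟩ := hdiag e he
  obtain ⟨a, rfl⟩ : ∃ a, j = i + a := ⟨j - i, by ring⟩
  rw [sub_add_cancel_left] at h0 h1 hm1
  have hneg : (-a).val = n - a.val := by rw [ZMod.neg_val, if_neg (neg_ne_zero.mp h0)]
  have hval0 : a.val ≠ 0 := by rw [Ne, ZMod.val_eq_zero]; exact neg_ne_zero.mp h0
  have hval1 : a.val ≠ 1 := fun h =>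
    hm1 (by rw [ZMod.val_injective n (h.trans (ZMod.val_one n).symm)])
  have hval_sub_one : a.val ≠ n - 1 := fun h =>
    h1 (ZMod.val_injective n (by rw [hneg, h, ZMod.val_one]; omega))
  have hlt := ZMod.val_lt a
  obtain h | h | ⟨hge, hle⟩ : a.val = 2 ∨ a.val = n - 2 ∨ (3 ≤ a.val ∧ a.val + 2 < n) := by omega
  · exact ⟨i, by rw [ZMod.val_injective n (h.trans hval2.symm)]⟩
  · have ha : -a = 2 := ZMod.val_injective n (by rw [hneg, hval2]; omega)
    refine ⟨i + a, ?_⟩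
    rw [Sym2.eq_swap, ← ha, add_neg_cancel_right]
  · exact absurd (ngonCross_mk_add i a 2 (by omega) (by omega) (by omega))
      (hnc _ he _ (by simpa only [add_right_comm] using mk_add_two_mem_of_rotTri_rotTri_eq h2 he))

section TranslateFree

variable {G : Type*} [AddCommGroup G] [DecidableEq G] {J : Finset G} {g : G}

theorem card_union_image_add (h : ∀ i ∈ J, i + g ∉ J) :
    (J ∪ J.image (· + g)).card = 2 * J.card := by
  rw [Finset.card_union_of_disjoint, Finset.card_image_of_injective _ (add_left_injective g)]
  · ring
  · rw [Finset.disjoint_right]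
    rintro _ hx
    obtain ⟨i, hi, rfl⟩ := Finset.mem_image.mp hx
    exact h i hi

theorem two_mul_card_le_of_add_notMem [Fintype G] (h : ∀ i ∈ J, i + g ∉ J) :
    2 * J.card ≤ Fintype.card G :=
  (card_union_image_add h).symm.trans_le (Finset.card_le_univ _)

theorem add_add_mem_of_two_mul_card_eq [Fintype G] (h : ∀ i ∈ J, i + g ∉ J)
    (hcard : 2 * J.card = Fintype.card G) : ∀ i ∈ J, i + g + g ∈ J := by
  intro i hi
  have huniv : J ∪ J.image (· + g) = Finset.univ :=
    Finset.eq_univ_of_card _ (by rw [card_union_image_add h, hcard])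
  rcases Finset.mem_union.mp (huniv ▸ Finset.mem_univ (i + g + g)) with hJ | himage
  · exact hJ
  · obtain ⟨j, hj, hji⟩ := Finset.mem_image.mp himage
    obtain rfl : j = i + g := add_right_cancel hji
    exact absurd hj (h i hi)

end TranslateFree

section EarBases

variable {n : ℕ} [NeZero n] {T : Finset (Sym2 (ZMod n))}

-- For `n = 4` the ear `{i, i + 2} = {i + 2, i + 4}` has two bases.
def earBases (n : ℕ) [NeZero n] (T : Finset (Sym2 (ZMod n))) : Finset (ZMod n) :=
  Finset.univ.filter fun i => s(i, i + 2) ∈ T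

@[simp]
theorem mem_earBases {i : ZMod n} : i ∈ earBases n T ↔ s(i, i + 2) ∈ T := by
  simp [earBases]

theorem image_earBases (hear : ∀ e ∈ T, IsEar n e) :
    (earBases n T).image (fun i => s(i, i + 2)) = T := by
  ext e
  simp only [Finset.mem_image, mem_earBases]
  refine ⟨fun ⟨i, hi, he⟩ => he ▸ hi, fun he => ?_⟩
  obtain ⟨i, rfl⟩ := hear e he
  exact ⟨i, he, rfl⟩

theorem card_earBases (hn : 5 ≤ n) (hear : ∀ e ∈ T, IsEar n e) : (earBases n T).card = T.card := by
  conv_rhs => rw [← image_earBases hear]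
  refine (Finset.card_image_of_injective _ fun a b hab => ?_).symm
  rcases Sym2.eq_iff.mp hab with ⟨h, -⟩ | ⟨ha, hb⟩
  · exact h
  · have h4 : ((4 : ℕ) : ZMod n) = 0 := by
      push_cast
      linear_combination hb - ha
    have := Nat.le_of_dvd (by norm_num) ((ZMod.natCast_eq_zero_iff 4 n).mp h4)
    omega

theorem add_one_notMem_earBases (hn : 4 ≤ n) (hnc : ∀ e ∈ T, ∀ f ∈ T, ¬ NgonCross n e f)
    {i : ZMod n} (hi : i ∈ earBases n T) : i + 1 ∉ earBases n T := fun hi1 =>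
  hnc _ (mem_earBases.mp hi) _ (mem_earBases.mp hi1) (ngonCross_ear_ear_add_one hn i)

theorem rotTri_ne_self (hn : 4 ≤ n) (hne : T.Nonempty)
    (hnc : ∀ e ∈ T, ∀ f ∈ T, ¬ NgonCross n e f) (hear : ∀ e ∈ T, IsEar n e) : rotTri n T ≠ T := by
  intro hrot
  obtain ⟨e, he⟩ := hne
  obtain ⟨i, rfl⟩ := hear e he
  have hi1 : s(i + 1, i + 1 + 2) ∈ T := by
    rw [← hrot, add_right_comm, ← rotDiag_mk]
    exact Finset.mem_image_of_mem _ he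
  exact add_one_notMem_earBases hn hnc (mem_earBases.mpr he) (mem_earBases.mpr hi1)

theorem rotTri_rotTri_eq_self (hear : ∀ e ∈ T, IsEar n e)
    (h : ∀ i ∈ earBases n T, i + 2 ∈ earBases n T) : rotTri n (rotTri n T) = T := by
  refine Finset.eq_of_subset_of_card_le (fun e he => ?_) ?_
  · rw [rotTri_rotTri] at he
    obtain ⟨_, he', rfl⟩ := Finset.mem_image.mp he
    obtain ⟨i, rfl⟩ := hear _ he'
    exact mem_earBases.mp (h i (mem_earBases.mpr he'))
  · rw [rotTri_rotTri, Finset.card_image_of_injective _ (Sym2.map.injective (add_left_injective 2))]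

end EarBases

theorem add_two_mem_earBases_four {T : Finset (Sym2 (ZMod 4))} {i : ZMod 4}
    (hi : i ∈ earBases 4 T) : i + 2 ∈ earBases 4 T := by
  rw [mem_earBases] at hi ⊢
  rwa [add_assoc, show (2 + 2 : ZMod 4) = 0 from rfl, add_zero, Sym2.eq_swap]

theorem add_two_mem_earBases_of_two_mul_card_eq {n : ℕ} [NeZero n] (hn : 5 ≤ n)
    {T : Finset (Sym2 (ZMod n))} (hnc : ∀ e ∈ T, ∀ f ∈ T, ¬ NgonCross n e f)
    (hear : ∀ e ∈ T, IsEar n e) (hcard : 2 * T.card = n) {i : ZMod n} (hi : i ∈ earBases n T) :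
    i + 2 ∈ earBases n T := by
  have := add_add_mem_of_two_mul_card_eq (fun i hi => add_one_notMem_earBases (by omega) hnc hi)
    (by rw [card_earBases hn hear, hcard, ZMod.card]) i hi
  rwa [add_assoc, one_add_one_eq_two] at this

theorem eq_four_or_six {n : ℕ} (hn : 4 ≤ n) {T : Finset (Sym2 (ZMod n))} (hcard : T.card = n - 3)
    (hnc : ∀ e ∈ T, ∀ f ∈ T, ¬ NgonCross n e f) (hear : ∀ e ∈ T, IsEar n e)
    (h2 : rotTri n (rotTri n T) = T) : n = 4 ∨ n = 6 := by
  have : NeZero n := ⟨by omega⟩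
  obtain rfl | hn5 := eq_or_lt_of_le hn
  · exact Or.inl rfl
  have hfree : ∀ i ∈ earBases n T, i + 1 ∉ earBases n T :=
    fun i hi => add_one_notMem_earBases hn hnc hi
  have hstep : ∀ i ∈ earBases n T, i + 2 ∈ earBases n T :=
    fun i hi => mem_earBases.mpr (mk_add_two_mem_of_rotTri_rotTri_eq h2 (mem_earBases.mp hi))
  have hle := two_mul_card_le_of_add_notMem hfree
  rw [card_earBases hn5 hear, hcard, ZMod.card] at hle
  refine Or.inr (by_contra fun h6 => ?_)
  obtain rfl : n = 5 := by omega
  obtain ⟨i, hi⟩ : (earBases 5 T).Nonempty :=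
    Finset.card_pos.mp (by rw [card_earBases le_rfl hear, hcard]; norm_num)
  have h : i + 2 + 2 + 2 = i + 1 := by
    rw [add_assoc, add_assoc, show (2 + (2 + 2) : ZMod 5) = 1 from rfl]
  exact hfree i hi (h ▸ hstep _ (hstep _ (hstep i hi)))

/-- A rotation orbit of triangulations of the `n`-gon (`n ≥ 4`) has size exactly `2`
if and only if `n ∈ {4, 6}` and every triangulation in the orbit consists only of ears. -/
theorem rotation_orbit_size_two_iff (n : ℕ) (hn : 4 ≤ n)
    (T : Finset (Sym2 (ZMod n))) (hT : IsTriangulation n T) :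
    (rotOrbit n T).ncard = 2 ↔
      ((n = 4 ∨ n = 6) ∧ ∀ S ∈ rotOrbit n T, ∀ e ∈ S, IsEar n e) := by
  have : NeZero n := ⟨by omega⟩
  obtain ⟨hcard, hdiag, hnc⟩ := hT
  rw [ncard_rotOrbit_eq_two_iff]
  constructor
  · rintro ⟨-, h2⟩
    have hear := isEar_of_rotTri_rotTri_eq hn hdiag hnc h2
    exact ⟨eq_four_or_six hn hcard hnc hear h2, fun S hS => isEar_of_mem_rotOrbit hear hS⟩
  · rintro ⟨hn46, hear⟩
    have hearT := hear T ⟨0, rfl⟩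
    refine ⟨rotTri_ne_self hn (Finset.card_pos.mp (by omega)) hnc hearT,
      rotTri_rotTri_eq_self hearT fun i hi => ?_⟩
    rcases hn46 with rfl | rfl
    · exact add_two_mem_earBases_four hi
    · exact add_two_mem_earBases_of_two_mul_card_eq (by norm_num) hnc hearT (by rw [hcard]) hi
end

section
/- For every n ≥ 4 and every triangulation T of the n-gon, T and its rotation r(T) are disjoint, i.e., T ∩ r(T) = ∅. -/
/-! A diagonal `{i, j}` and its rotation `{i+1, j+1}` always cross: `i + 1` lies strictly inside
the arc from `i` to `j`, and `j + 1` strictly inside the arc from `j` to `i`. So no set of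
pairwise noncrossing diagonals contains a diagonal together with its rotation. -/

theorem ngonBtw_add_one {n : ℕ} {a b : ZMod n}
    (h0 : b - a ≠ 0) (h1 : b - a ≠ 1) (hneg : b - a ≠ -1) : NgonBtw n a (a + 1) b := by
  rw [NgonBtw, add_sub_cancel_left]
  cases n with
  | zero =>
    -- `ZMod 0 = ℤ` and `val = Int.natAbs`: here `b - a ≠ -1` is needed as well
    have key (x : ℤ) (h0 : x ≠ 0) (h1 : x ≠ 1) (hneg : x ≠ -1) :
        0 < Int.natAbs 1 ∧ Int.natAbs 1 < x.natAbs := by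
      omega
    exact key (b - a) h0 h1 hneg
  | succ m =>
    obtain rfl | hm := Nat.eq_zero_or_pos m
    · exact absurd (Subsingleton.elim (α := ZMod 1) _ _) h0
    have : Fact (1 < m + 1) := ⟨by omega⟩
    have hv0 : (b - a).val ≠ 0 := (ZMod.val_eq_zero _).not.mpr h0
    have hv1 : (b - a).val ≠ 1 := (ZMod.val_eq_one (by omega) _).not.mpr h1
    rw [ZMod.val_one]
    omega

theorem ngonCross_rotDiag {n : ℕ} {e : Sym2 (ZMod n)} (he : IsDiagonal n e) :
    NgonCross n e (rotDiag n e) := by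
  obtain ⟨i, j, rfl, h0, h1, hneg⟩ := he
  have hji : j - i = -(i - j) := (neg_sub i j).symm
  refine ⟨i, j, i + 1, j + 1, rfl, rfl, ngonBtw_add_one ?_ ?_ ?_, ngonBtw_add_one h0 h1 hneg⟩
  · rwa [hji, neg_ne_zero]
  · rwa [hji, Ne, neg_eq_iff_eq_neg]
  · rwa [hji, Ne, neg_inj]

theorem triangulation_disjoint_rotation_general (n : ℕ)
    (T : Finset (Sym2 (ZMod n))) (hT : IsTriangulation n T) :
    Disjoint T (rotTri n T) := by
  rw [Finset.disjoint_left]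
  rintro _ he hrot
  obtain ⟨f, hf, rfl⟩ := Finset.mem_image.mp hrot
  exact hT.2.2 f hf _ he (ngonCross_rotDiag (hT.2.1 f hf))

/-- For every `n ≥ 4` and every triangulation `T` of the `n`-gon,
`T` and its rotation `r(T)` share no diagonal. -/
theorem triangulation_disjoint_rotation (n : ℕ) (hn : 4 ≤ n)
    (T : Finset (Sym2 (ZMod n))) (hT : IsTriangulation n T) :
    Disjoint T (rotTri n T) :=
  triangulation_disjoint_rotation_general n T hT
end

section
/- For every n ≥ 4, the Kneser graph KG(Perm_n) of the permutohedron contains a Hamiltonian cycle. -/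
/-!
Write `rotate σ c` for `σ` followed by `x ↦ x - c` on `ℤ/n`. The preimage of `[k]` under
`rotate σ c` is the preimage under `σ` of the cyclic window `[c, c + k)`, so the `n` rotations of
a permutation are pairwise adjacent, and `S_n` splits into `(n - 1)!` such cliques, indexed by the
permutations fixing `0`. A Hamiltonian cycle can run through the cliques one after another,
entering and leaving each at distinct vertices, as soon as between any two cliques `σ ≠ τ` there
is an edge avoiding a prescribed exit from the first and a prescribed entry into the second.

For `ρ = σ τ⁻¹`, which fixes `0` and is not the identity, `rotate σ a` and `rotate τ b` are
adjacent when `ρ` maps no proper window at `b` onto the window of the same length at `a`. If `ρ`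
breaks a window `{b, b + 1}` at an admissible `b`, the other `n - 2` window lengths exclude at
most `n - 2` values of `a`. Otherwise `ρ` sends consecutive elements to consecutive elements
along a path through all of `ℤ/n`, so it is `x ↦ -x`, and `b = 1 - a` works for every `a`.
-/

theorem exists_list_nodup_head_getLast {α : Type*} [DecidableEq α] [Fintype α] {a x : α}
    (hax : a ≠ x) :
    ∃ l : List α, l.Nodup ∧ (∀ c, c ∈ l) ∧ l.head? = some a ∧ l.getLast? = some x := by
  refine ⟨a :: (((Finset.univ.erase a).erase x).toList ++ [x]), ?_, fun c => ?_, rfl,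
    by rw [← List.cons_append, List.getLast?_append]; simp⟩
  · simpa [List.nodup_append, hax, Finset.nodup_toList] using fun _ h _ => h
  · simp only [List.mem_cons, List.mem_append, Finset.mem_toList, Finset.mem_erase,
      Finset.mem_univ]
    tauto

namespace SimpleGraph

variable {V : Type*} [Fintype V] [DecidableEq V] {G : SimpleGraph V}

theorem isHamiltonian_of_list (l : List V) (hnd : l.Nodup) (hmem : ∀ v, v ∈ l)
    (hchain : l.IsChain G.Adj) (hclose : ∀ a ∈ l.getLast?, ∀ b ∈ l.head?, G.Adj a b)
    (hcard : 3 ≤ Fintype.card V) : G.IsHamiltonian := by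
  intro _
  have hlen : l.length = Fintype.card V := by
    rw [← List.toFinset_card_of_nodup hnd,
      Finset.eq_univ_of_forall (fun v => List.mem_toFinset.mpr (hmem v)), Finset.card_univ]
  obtain ⟨m, hm⟩ : ∃ m, Fintype.card V = m + 3 := ⟨_, (Nat.sub_add_cancel hcard).symm⟩
  let f : Fin (m + 3) → V := fun i => l[i.val]'(by omega)
  have hf : Function.Injective f := fun i j h => Fin.ext ((hnd.getElem_inj_iff).mp h)
  have hsucc : ∀ i, G.Adj (f i) (f (i + 1)) := by
    intro i
    by_cases hi : i = Fin.last (m + 2)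
    · subst hi
      refine hclose _ ?_ _ ?_
      · simp [f, List.getLast?_eq_getElem?, hlen, hm]
      · simp [f, List.head?_eq_getElem?]
    · have h := hchain.getElem i.val (by have := Fin.val_lt_last hi; omega)
      simpa [f, Fin.val_add_one, hi] using h
  have hcopy : (cycleGraph (m + 3)).IsContained G := by
    refine ⟨⟨⟨f, ?_⟩, hf⟩⟩
    rintro u v (h | h)
    · rw [eq_add_of_sub_eq' h]; exact (hsucc v).symm
    · rw [eq_add_of_sub_eq' h]; exact hsucc u
  obtain ⟨v, p, hp, hplen⟩ := (cycleGraph_isContained_iff (by omega)).mp hcopy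
  exact ⟨v, p, Walk.isHamiltonianCycle_iff_isCycle_and_length_eq.mpr ⟨hp, by omega⟩⟩

section FiberCliques

variable {ι α : Type*} [DecidableEq α] [Fintype α] {H : SimpleGraph (ι × α)}

theorem exists_fiber_path (hclique : ∀ i a b, a ≠ b → H.Adj (i, a) (i, b)) (i : ι) {a x : α}
    (hax : a ≠ x) :
    ∃ p : List (ι × α), p.Nodup ∧ (∀ y, y ∈ p ↔ y.1 = i) ∧ p.IsChain H.Adj ∧
      p.head? = some (i, a) ∧ p.getLast? = some (i, x) := by
  obtain ⟨l, hnd, hmem, hhead, hlast⟩ := exists_list_nodup_head_getLast hax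
  refine ⟨l.map (Prod.mk i), hnd.map (Prod.mk_right_injective i), fun y => ?_, ?_,
    by simp [hhead], by simp [hlast]⟩
  · obtain ⟨j, c⟩ := y
    simp [hmem, eq_comm]
  · exact List.isChain_map_of_isChain (Prod.mk i) (hclique i) hnd.isChain

theorem exists_path_through_fibers
    (hclique : ∀ i a b, a ≠ b → H.Adj (i, a) (i, b))
    (htrans : ∀ i j, i ≠ j → ∀ f f', ∃ a ≠ f, ∃ b ≠ f', H.Adj (i, a) (j, b)) :
    ∀ (L : List ι) (i : ι) (a x : α), (i :: L).Nodup → (L = [] → a ≠ x) →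
      ∃ p : List (ι × α), p.Nodup ∧ (∀ y, y ∈ p ↔ y.1 ∈ i :: L) ∧ p.IsChain H.Adj ∧
        p.head? = some (i, a) ∧ p.getLast? = some ((i :: L).getLast (List.cons_ne_nil i L), x)
  | [], i, a, x, _, hax => by
    simpa using exists_fiber_path hclique i (hax rfl)
  | j :: L, i, a, x, hnd, _ => by
    have hi : i ∉ j :: L := (List.nodup_cons.mp hnd).1
    obtain ⟨a', ha', b, hb, hadj⟩ := htrans i j (fun h => hi (h ▸ List.mem_cons_self)) a x
    obtain ⟨p, hpnd, hpmem, hpchain, hphead, hplast⟩ :=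
      exists_fiber_path hclique i (Ne.symm ha')
    obtain ⟨q, hqnd, hqmem, hqchain, hqhead, hqlast⟩ :=
      exists_path_through_fibers hclique htrans L j b x (List.nodup_cons.mp hnd).2 fun _ => hb
    refine ⟨p ++ q, ?_, fun y => ?_, ?_, ?_, ?_⟩
    · refine List.nodup_append.mpr ⟨hpnd, hqnd, fun y hy z hz hyz => hi ?_⟩
      rw [← (hpmem y).mp hy, hyz]
      exact (hqmem z).mp hz
    · simp [hpmem, hqmem]
    · refine hpchain.append hqchain fun u hu v hv => ?_
      rw [hplast, Option.mem_some_iff] at hu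
      rw [hqhead, Option.mem_some_iff] at hv
      exact hu ▸ hv ▸ hadj
    · simp [hphead]
    · simp [hqlast]

theorem isHamiltonian_of_fiber_cliques {V : Type*} [Fintype V] [DecidableEq V]
    [Fintype ι] [Nontrivial ι] [Nontrivial α] (G : SimpleGraph V)
    (e : ι × α ≃ V) (hclique : ∀ i a b, a ≠ b → G.Adj (e (i, a)) (e (i, b)))
    (htrans : ∀ i j, i ≠ j → ∀ f f', ∃ a ≠ f, ∃ b ≠ f', G.Adj (e (i, a)) (e (j, b))) :
    G.IsHamiltonian := by
  have hlen : 1 < (Finset.univ : Finset ι).toList.length := by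
    simpa using Fintype.one_lt_card
  obtain ⟨i, j, L, hc⟩ : ∃ i j L, (Finset.univ : Finset ι).toList = i :: j :: L := by
    match (Finset.univ : Finset ι).toList, hlen with
    | i :: j :: L, _ => exact ⟨i, j, L, rfl⟩
  have hnd : (i :: j :: L).Nodup := hc ▸ Finset.nodup_toList _
  set ℓ := (j :: L).getLast (List.cons_ne_nil _ _)
  have hℓi : ℓ ≠ i := fun h => (List.nodup_cons.mp hnd).1 (h ▸ List.getLast_mem _)
  obtain ⟨x, -, a, -, hclose⟩ := htrans ℓ i hℓi (Classical.arbitrary α) (Classical.arbitrary α)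
  obtain ⟨p, hpnd, hpmem, hpchain, hphead, hplast⟩ :=
    exists_path_through_fibers (H := G.comap e) hclique htrans (j :: L) i a x hnd
      (fun h => absurd h (List.cons_ne_nil _ _))
  refine isHamiltonian_of_list (p.map e) (hpnd.map e.injective) (fun v => ?_)
    (List.isChain_map_of_isChain e (fun _ _ h => h) hpchain) ?_ ?_
  · rw [List.mem_map]
    refine ⟨e.symm v, (hpmem _).mpr ?_, e.apply_symm_apply v⟩
    rw [← hc]
    exact Finset.mem_toList.mpr (Finset.mem_univ _)
  · simpa [hphead, hplast, ℓ] using hclose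
  · rw [← Fintype.card_congr e, Fintype.card_prod]
    have := Fintype.one_lt_card (α := ι)
    have := Fintype.one_lt_card (α := α)
    nlinarith

end FiberCliques

end SimpleGraph

theorem eq_add_nsmul_of_steps_eq_or_neg {G : Type*} [AddCommGroup G] {u : ℕ → G} {d : G}
    {N : ℕ} (hstep : ∀ t < N, u (t + 1) - u t = d ∨ u (t + 1) - u t = -d)
    (hback : ∀ t, t + 2 ≤ N → u (t + 2) ≠ u t) :
    ∀ t ≤ N, u t = u 0 + t • (u 1 - u 0) := by
  have hconst : ∀ t < N, u (t + 1) - u t = u 1 - u 0 := by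
    intro t
    induction t with
    | zero => simp
    | succ t ih =>
      intro ht
      rw [← ih (by omega)]
      have hturn : u (t + 1) - u t = -(u (t + 2) - u (t + 1)) → False := by
        intro h
        apply hback t ht
        rw [← sub_eq_zero, ← sub_add_sub_cancel _ (u (t + 1)), h, add_neg_cancel]
      rcases hstep t (by omega) with h₁ | h₁ <;> rcases hstep (t + 1) ht with h₂ | h₂
      · rw [h₁, h₂]
      · exact (hturn (by rw [h₁, h₂, neg_neg])).elim
      · exact (hturn (by rw [h₁, h₂])).elim
      · rw [h₁, h₂]
  intro t
  induction t with
  | zero => simp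
  | succ t ih =>
    intro ht
    rw [← sub_add_cancel (u (t + 1)) (u t), hconst t ht, ih (by omega), succ_nsmul]
    abel

open scoped Fin.CommRing Fin.NatCast

namespace Fin

variable {n : ℕ} [NeZero n]

def cyclicWindow (b : Fin n) (k : ℕ) : Set (Fin n) := {x | ((x - b : Fin n) : ℕ) < k}

theorem self_mem_cyclicWindow {b : Fin n} {k : ℕ} (hk : 1 ≤ k) : b ∈ cyclicWindow b k := by
  simp only [cyclicWindow, Set.mem_ofPred_eq, sub_self, val_zero]
  omega

theorem sub_one_notMem_cyclicWindow {b : Fin n} {k : ℕ} (hk : k < n) :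
    b - 1 ∉ cyclicWindow b k := by
  obtain ⟨m, rfl⟩ := Nat.exists_eq_succ_of_ne_zero (NeZero.ne n)
  simp only [cyclicWindow, Set.mem_ofPred_eq, sub_sub_cancel_left, coe_neg_one]
  omega

theorem sub_one_mem_cyclicWindow {b y : Fin n} {k : ℕ} (hy : y ∈ cyclicWindow b k)
    (hyb : y ≠ b) : y - 1 ∈ cyclicWindow b k := by
  have h : y - b ≠ 0 := sub_ne_zero.mpr hyb
  simp only [cyclicWindow, Set.mem_ofPred_eq] at hy ⊢
  rw [sub_right_comm, val_sub_one_of_ne_zero h]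
  omega

theorem cyclicWindow_left_injective {k : ℕ} (hk : 1 ≤ k) (hkn : k < n) :
    Function.Injective (cyclicWindow · k : Fin n → Set (Fin n)) := by
  intro b b' (h : cyclicWindow b k = cyclicWindow b' k)
  by_contra hne
  have hb' : b' ∈ cyclicWindow b k := h ▸ self_mem_cyclicWindow hk
  exact sub_one_notMem_cyclicWindow hkn (h ▸ sub_one_mem_cyclicWindow hb' (Ne.symm hne))

theorem cyclicWindow_two (hn : 2 ≤ n) (b : Fin n) : cyclicWindow b 2 = {b, b + 1} := by
  have h1 : ((1 : Fin n) : ℕ) = 1 := by rw [val_one', Nat.mod_eq_of_lt (by omega)]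
  ext x
  rw [Set.mem_insert_iff, Set.mem_singleton_iff, ← sub_eq_zero, ← sub_eq_iff_eq_add',
    Fin.ext_iff, Fin.ext_iff, val_zero, h1]
  exact Nat.lt_succ_iff.trans Nat.le_one_iff_eq_zero_or_eq_one

theorem sub_eq_one_or_neg_one_of_image_cyclicWindow_two (hn : 2 ≤ n) {ρ : Equiv.Perm (Fin n)}
    {b m : Fin n} (h : ρ '' cyclicWindow b 2 = cyclicWindow m 2) :
    ρ (b + 1) - ρ b = 1 ∨ ρ (b + 1) - ρ b = -1 := by
  rw [cyclicWindow_two hn, cyclicWindow_two hn, Set.image_pair] at h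
  rcases Set.pair_eq_pair_iff.mp h with ⟨h₁, h₂⟩ | ⟨h₁, h₂⟩
  · left; rw [h₁, h₂]; ring
  · right; rw [h₁, h₂]; ring

theorem exists_eq_add_mul_of_sub_eq_one_or_neg_one (hn : 3 ≤ n) (ρ : Equiv.Perm (Fin n))
    (b₀ : Fin n) (h : ∀ b ≠ b₀, ρ (b + 1) - ρ b = 1 ∨ ρ (b + 1) - ρ b = -1) :
    ∃ c s : Fin n, (s = 1 ∨ s = -1) ∧ ∀ x, ρ x = c + s * x := by
  have hne : ∀ t : ℕ, t < n - 1 → b₀ + 1 + t ≠ b₀ := by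
    intro t ht h
    have : ((t + 1 : ℕ) : Fin n) = 0 := by push_cast; linear_combination h
    exact absurd (Nat.le_of_dvd t.succ_pos (natCast_eq_zero.mp this)) (by omega)
  have hback : ∀ t : ℕ, t + 2 ≤ n - 1 → ρ (b₀ + 1 + (t + 2 : ℕ)) ≠ ρ (b₀ + 1 + t) := by
    intro t _ h
    have h' := ρ.injective h
    push_cast at h'
    have : ((2 : ℕ) : Fin n) = 0 := by push_cast; linear_combination h'
    exact absurd (Nat.le_of_dvd two_pos (natCast_eq_zero.mp this)) (by omega)
  have hlin := eq_add_nsmul_of_steps_eq_or_neg (u := fun t : ℕ => ρ (b₀ + 1 + t)) (d := 1)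
    (N := n - 1) (fun t ht => by simpa [add_assoc] using h _ (hne t ht)) hback
  set s := ρ (b₀ + 1 + (1 : ℕ)) - ρ (b₀ + 1 + (0 : ℕ))
  refine ⟨ρ (b₀ + 1) - (b₀ + 1) * s, s, by simpa [s] using h _ (hne 0 (by omega)), fun x => ?_⟩
  have hx := hlin (x - (b₀ + 1)).val (by omega)
  simp only [cast_val_eq_self, nsmul_eq_mul, Nat.cast_zero, add_zero] at hx
  rw [show b₀ + 1 + (x - (b₀ + 1)) = x by ring] at hx
  rw [hx]
  ring

end Fin

namespace KGPerm

open Equiv Fin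

variable {n : ℕ} [NeZero n]

def Separates (ρ : Perm (Fin n)) (b a : Fin n) : Prop :=
  ∀ k, 1 ≤ k → k ≤ n - 1 → ρ '' cyclicWindow b k ≠ cyclicWindow a k

theorem separates_one {a b : Fin n} (hab : a ≠ b) : Separates 1 b a := fun k hk hkn h =>
  hab (cyclicWindow_left_injective hk (by omega) (by simpa using h)).symm

theorem separates_neg (a : Fin n) : Separates (Equiv.neg (Fin n)) (1 - a) a := by
  intro k hk hkn h
  have : a - 1 ∈ cyclicWindow a k := h ▸ ⟨1 - a, self_mem_cyclicWindow hk, by simp⟩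
  exact sub_one_notMem_cyclicWindow (by omega) this

theorem exists_separates_of_image_ne_cyclicWindow_two (hn : 3 ≤ n) (ρ : Perm (Fin n))
    {b : Fin n} (hb : ∀ m, ρ '' cyclicWindow b 2 ≠ cyclicWindow m 2) (f : Fin n) :
    ∃ a ≠ f, Separates ρ b a := by
  classical
  set bad := ((Finset.Icc 1 (n - 1)).erase 2).biUnion
    fun k => Finset.univ.filter fun a => ρ '' cyclicWindow b k = cyclicWindow a k
  have hbad : bad.card ≤ n - 2 := by
    refine (Finset.card_biUnion_le_card_mul _ _ 1 fun k hk => ?_).trans ?_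
    · simp only [Finset.mem_erase, Finset.mem_Icc] at hk
      refine Finset.card_le_one.mpr fun a ha a' ha' => ?_
      simp only [Finset.mem_filter, Finset.mem_univ, true_and] at ha ha'
      exact cyclicWindow_left_injective hk.2.1 (by omega) (ha.symm.trans ha')
    · rw [mul_one, Finset.card_erase_of_mem (by simp only [Finset.mem_Icc]; omega), Nat.card_Icc]
      omega
  obtain ⟨a, -, ha⟩ := Finset.exists_mem_notMem_of_card_lt_card (s := insert f bad)
    (t := Finset.univ) (by rw [Finset.card_univ, Fintype.card_fin]; grind [Finset.card_insert_le])
  refine ⟨a, fun h => ha (h ▸ Finset.mem_insert_self _ _), fun k hk hkn h => ?_⟩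
  rcases eq_or_ne k 2 with rfl | hk2
  · exact hb a h
  · exact ha (Finset.mem_insert_of_mem (Finset.mem_biUnion.mpr
      ⟨k, by simp [hk, hkn, hk2], by simp [h]⟩))

theorem exists_separates (hn : 3 ≤ n) {ρ : Perm (Fin n)} (h0 : ρ 0 = 0) (h1 : ρ ≠ 1)
    (f f' : Fin n) : ∃ a ≠ f, ∃ b ≠ f', Separates ρ b a := by
  by_cases hpair : ∃ b ≠ f', ∀ m, ρ '' cyclicWindow b 2 ≠ cyclicWindow m 2
  · obtain ⟨b, hb, hb2⟩ := hpair
    obtain ⟨a, ha, hsep⟩ := exists_separates_of_image_ne_cyclicWindow_two hn ρ hb2 f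
    exact ⟨a, ha, b, hb, hsep⟩
  push Not at hpair
  obtain ⟨c, s, hs, hρ⟩ := exists_eq_add_mul_of_sub_eq_one_or_neg_one hn ρ f' fun b hb => by
    obtain ⟨m, hm⟩ := hpair b hb
    exact sub_eq_one_or_neg_one_of_image_cyclicWindow_two (by omega) hm
  have hc : c = 0 := by simpa [h0] using (hρ 0).symm
  have hneg : ρ = Equiv.neg (Fin n) := by
    rcases hs with rfl | rfl
    · exact absurd (Equiv.ext fun x => by simp [hρ, hc]) h1
    · ext x
      simp [hρ, hc]
  obtain ⟨a, -, ha⟩ := Finset.exists_mem_notMem_of_card_lt_card (s := {f, 1 - f'})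
    (t := Finset.univ) (by rw [Finset.card_univ, Fintype.card_fin]; grind [Finset.card_le_two])
  simp only [Finset.mem_insert, Finset.mem_singleton, not_or] at ha
  refine ⟨a, ha.1, 1 - a, fun h => ha.2 (by rw [← h]; ring), hneg ▸ separates_neg a⟩

def rotate (σ : Perm (Fin n)) (c : Fin n) : Perm (Fin n) := σ.trans (Equiv.subRight c)

theorem preimage_rotate_firstK (σ : Perm (Fin n)) (c : Fin n) (k : ℕ) :
    ⇑(rotate σ c) ⁻¹' firstK n k = ⇑σ ⁻¹' cyclicWindow c k := rfl

theorem adj_rotate_rotate (hn : 2 ≤ n) {σ τ : Perm (Fin n)} {a b : Fin n}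
    (h : Separates (σ * τ⁻¹) b a) : (KGPerm n).Adj (rotate σ a) (rotate τ b) := by
  have hpre : ∀ k, 1 ≤ k → k ≤ n - 1 →
      ⇑(rotate σ a) ⁻¹' firstK n k ≠ ⇑(rotate τ b) ⁻¹' firstK n k := by
    intro k hk hkn heq
    apply h k hk hkn
    rw [preimage_rotate_firstK, preimage_rotate_firstK] at heq
    rw [Perm.coe_mul, Set.image_comp, Perm.coe_inv, image_symm_eq_preimage, ← heq,
      image_preimage]
  exact ⟨fun heq => hpre 1 le_rfl (by omega) (by rw [heq]), hpre⟩

def rotationEquiv : {σ : Perm (Fin n) // σ 0 = 0} × Fin n ≃ Perm (Fin n) where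
  toFun p := rotate p.1 p.2
  invFun σ := (⟨rotate σ (σ 0), by simp [rotate]⟩, -σ 0)
  left_inv := fun ⟨⟨σ, hσ⟩, c⟩ => by
    ext x <;> simp [rotate, hσ]
  right_inv σ := by
    ext x
    simp [rotate]

theorem nontrivial_fix_zero (hn : 3 ≤ n) : Nontrivial {σ : Perm (Fin n) // σ 0 = 0} := by
  have h01 : (0 : Fin n) ≠ ⟨1, by omega⟩ := by simp [Fin.ext_iff]
  have h02 : (0 : Fin n) ≠ ⟨2, by omega⟩ := by simp [Fin.ext_iff]
  have h12 : (⟨1, by omega⟩ : Fin n) ≠ ⟨2, by omega⟩ := by simp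
  refine ⟨⟨1, rfl⟩, ⟨swap _ _, swap_apply_of_ne_of_ne h01 h02⟩, fun h => h12 ?_⟩
  simpa using congrArg (fun σ : {σ : Perm (Fin n) // σ 0 = 0} => σ.1 ⟨1, by omega⟩) h

end KGPerm

/-- For every `n ≥ 4`, the Kneser graph of the permutohedron contains a
Hamiltonian cycle. -/
theorem kg_permutohedron_hamiltonian (n : ℕ) (hn : 4 ≤ n) :
    (KGPerm n).IsHamiltonian := by
  have : NeZero n := ⟨by omega⟩
  have : Nontrivial (Fin n) := Fin.nontrivial_iff_two_le.mpr (by omega)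
  have := KGPerm.nontrivial_fix_zero (n := n) (by omega)
  refine SimpleGraph.isHamiltonian_of_fiber_cliques (KGPerm n) KGPerm.rotationEquiv
    (fun σ a b hab => ?_) (fun σ τ hστ f f' => ?_)
  · exact KGPerm.adj_rotate_rotate (by omega) (by simpa using KGPerm.separates_one hab)
  · have hρ0 : (σ.1 * τ.1⁻¹) 0 = 0 := by
      rw [Equiv.Perm.mul_apply, Equiv.Perm.inv_eq_iff_eq.mpr τ.2.symm, σ.2]
    have hρ1 : σ.1 * τ.1⁻¹ ≠ 1 := mul_inv_eq_one.not.mpr (Subtype.coe_ne_coe.mpr hστ)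
    obtain ⟨a, ha, b, hb, hsep⟩ := KGPerm.exists_separates (by omega) hρ0 hρ1 f f'
    exact ⟨a, ha, b, hb, KGPerm.adj_rotate_rotate (by omega) hsep⟩
end

section
/- Let n ≥ 2, let ρ ∈ S_n be the n-cycle sending i to i+1 (mod n, with representatives in {1,...,n}), and let H = ⟨ρ⟩. Then every right coset Hσ is a clique in the Kneser graph KG(Perm_n); equivalently, for every σ ∈ S_n, every i with 1 ≤ i ≤ n-1, and every k with 1 ≤ k ≤ n-1, one has σ⁻¹([k]) ≠ (ρ^i σ)⁻¹([k]). -/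
/-
Since `(ρ^i σ)⁻¹([k]) = σ⁻¹(ρ^{-i}([k]))` and taking preimages under the bijection `σ` is
injective, the two sets agree only if `ρ^i` maps `[k]` onto itself. It does not: `ρ^i` sends
`k - i` (truncated at `0`), which lies in `[k]`, to `max k i`, which does not.
-/

open Equiv

theorem finRotate_pow_apply_val {n : ℕ} (i : ℕ) (j : Fin n) :
    ((finRotate n ^ i) j : ℕ) = (j + i) % n := by
  have := j.neZero
  induction i with
  | zero => simp [Nat.mod_eq_of_lt j.isLt]
  | succ i ih =>
    rw [pow_succ', Perm.mul_apply, finRotate_apply, Fin.val_add, ih, Fin.val_one', ← add_assoc,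
      Nat.add_mod (j + i) 1]

theorem Equiv.Perm.preimage_mul_ne_iff {α : Type*} (σ τ : Perm α) (s : Set α) :
    σ ⁻¹' s ≠ (τ * σ) ⁻¹' s ↔ s ≠ τ ⁻¹' s := by
  rw [Perm.coe_mul, Set.preimage_comp, (Set.preimage_injective.mpr σ.surjective).ne_iff]

theorem firstK_ne_preimage_finRotate_pow {n i k : ℕ} (hi1 : 1 ≤ i) (hi2 : i ≤ n - 1)
    (hk1 : 1 ≤ k) (hk2 : k ≤ n - 1) :
    firstK n k ≠ (finRotate n ^ i) ⁻¹' firstK n k := by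
  intro h
  let j : Fin n := ⟨k - i, by omega⟩
  have hj : j ∈ firstK n k := show k - i < k by omega
  rw [h, Set.mem_preimage, firstK, Set.mem_ofPred_eq, finRotate_pow_apply_val,
    Nat.mod_eq_of_lt (by simp only [j]; omega)] at hj
  simp only [j] at hj
  omega

theorem rotation_cosets_are_cliques_general (n : ℕ) (σ : Equiv.Perm (Fin n))
    (i : ℕ) (hi1 : 1 ≤ i) (hi2 : i ≤ n - 1)
    (k : ℕ) (hk1 : 1 ≤ k) (hk2 : k ≤ n - 1) :
    (⇑σ) ⁻¹' (firstK n k) ≠ (⇑((finRotate n) ^ i * σ)) ⁻¹' (firstK n k) :=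
  (Perm.preimage_mul_ne_iff σ _ _).mpr (firstK_ne_preimage_finRotate_pow hi1 hi2 hk1 hk2)

/-- The right cosets of the cyclic group generated by the `n`-cycle
`ρ = finRotate n : i ↦ i + 1 (mod n)` are cliques in `KG(Perm_n)`: for every
`σ`, every `1 ≤ i ≤ n - 1` and every `1 ≤ k ≤ n - 1` one has
`σ⁻¹([k]) ≠ (ρ^i σ)⁻¹([k])`. -/
theorem rotation_cosets_are_cliques (n : ℕ) (hn : 2 ≤ n) (σ : Equiv.Perm (Fin n))
    (i : ℕ) (hi1 : 1 ≤ i) (hi2 : i ≤ n - 1)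
    (k : ℕ) (hk1 : 1 ≤ k) (hk2 : k ≤ n - 1) :
    (⇑σ) ⁻¹' (firstK n k) ≠ (⇑((finRotate n) ^ i * σ)) ⁻¹' (firstK n k) :=
  rotation_cosets_are_cliques_general n σ i hi1 hi2 k hk1 hk2
end

section
/- Let D_n denote the number of decomposable permutations in S_n. Then for every n ≥ 2, D_n ≤ n! · Σ_{p=1}^{n-1} (binomial(n,p))⁻¹. Consequently, there is a constant C > 0 such that for all n ≥ 2 the number I_n of indecomposable permutations in S_n satisfies I_n ≥ (1 - C/n) · n!. -/
/-- A permutation of `{1, …, n}` is decomposable if `σ([p]) = [p]` for some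
`1 ≤ p ≤ n - 1`. -/
def Decomposable (n : ℕ) (σ : Equiv.Perm (Fin n)) : Prop :=
  ∃ p : ℕ, 1 ≤ p ∧ p ≤ n - 1 ∧ (⇑σ) '' (firstK n p) = firstK n p

/-!
A decomposable permutation stabilizes `[p]` for some `1 ≤ p ≤ n - 1`, and exactly
`p! (n - p)! = n! / binomial(n,p)` permutations do so; the union bound gives the estimate on `D_n`.
For the second claim, the boundary terms `p = 1, n - 1` of `Σ binomial(n,p)⁻¹` are `1/n`, and by
unimodality of binomial coefficients every other term is at most
`binomial(n,2)⁻¹ = 2 / (n (n - 1))`, so the sum is at most `4 / n` and `C = 4` works.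
-/

open Nat Finset

theorem Equiv.Perm.card_of_image_eq_self {α : Type*} [Finite α] (s : Set α) :
    Nat.card {σ : Equiv.Perm α // σ '' s = s} = (Nat.card s)! * (Nat.card ↑sᶜ)! := by
  classical
  cases nonempty_fintype α
  set f : α → Bool := fun a => decide (a ∈ s)
  calc Nat.card {σ : Equiv.Perm α // σ '' s = s}
      = Fintype.card {σ : Equiv.Perm α // f ∘ σ = f} := by
        rw [← Nat.card_eq_fintype_card]
        refine Nat.card_congr (Equiv.subtypeEquivRight fun σ => ?_)
        rw [eq_comm, ← Equiv.preimage_eq_iff_eq_image, funext_iff, Set.ext_iff]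
        simp [f]
    _ = _ := by
        rw [DomMulAct.stabilizer_card, Fintype.prod_bool, Nat.card_eq_fintype_card,
          Nat.card_eq_fintype_card]
        congr 2 <;> exact Fintype.card_congr (Equiv.subtypeEquivRight (by simp [f]))

theorem Nat.card_subtype_exists_le_sum {α ι : Type*} [Finite α] (t : Finset ι)
    (P : ι → α → Prop) : Nat.card {x // ∃ i ∈ t, P i x} ≤ ∑ i ∈ t, Nat.card {x // P i x} := by
  classical
  cases nonempty_fintype α
  simp only [Nat.card_eq_fintype_card, Fintype.card_subtype]
  calc #{x | ∃ i ∈ t, P i x} = #(t.biUnion fun i => {x | P i x}) := by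
        congr 1
        ext x
        simp
    _ ≤ _ := card_biUnion_le

theorem card_firstK {n p : ℕ} (hp : p ≤ n) : Nat.card (firstK n p) = p :=
  (Nat.card_congr (Fin.castLEquiv hp).symm).trans (Nat.card_fin p)

theorem card_perm_of_image_firstK_eq {n p : ℕ} (hp : p ≤ n) :
    Nat.card {σ : Equiv.Perm (Fin n) // σ '' firstK n p = firstK n p} = p ! * (n - p)! := by
  rw [Equiv.Perm.card_of_image_eq_self, Nat.card_coe_set_eq (firstK n p)ᶜ, Set.ncard_compl,
    ← Nat.card_coe_set_eq, card_firstK hp, Nat.card_fin]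

theorem card_decomposable_le_sum_factorial (n : ℕ) :
    Nat.card {σ : Equiv.Perm (Fin n) // Decomposable n σ} ≤
      ∑ p ∈ Icc 1 (n - 1), p ! * (n - p)! := by
  have hdecomp : ∀ σ, Decomposable n σ ↔ ∃ p ∈ Icc 1 (n - 1), σ '' firstK n p = firstK n p := by
    simp [Decomposable, and_assoc]
  rw [Nat.card_congr (Equiv.subtypeEquivRight hdecomp)]
  refine (Nat.card_subtype_exists_le_sum _ _).trans (sum_le_sum fun p hp => ?_)
  rw [card_perm_of_image_firstK_eq (by grind)]

theorem Nat.choose_le_choose_of_le_of_le_half {n j k : ℕ} (hjk : j ≤ k) (hk : k ≤ n / 2) :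
    n.choose j ≤ n.choose k := by
  induction k, hjk using Nat.le_induction with
  | base => rfl
  | succ k _ ih => exact (ih (by omega)).trans (choose_le_succ_of_lt_half_left (by omega))

theorem Nat.choose_le_choose_of_le_of_add_le {n j k : ℕ} (hjk : j ≤ k) (hkn : j + k ≤ n) :
    n.choose j ≤ n.choose k := by
  rcases le_or_gt k (n / 2) with hk | hk
  · exact choose_le_choose_of_le_of_le_half hjk hk
  · rw [← choose_symm (by omega : k ≤ n)]
    exact choose_le_choose_of_le_of_le_half (by omega) (by omega)

theorem inv_choose_le_of_two_le {n p : ℕ} (hp : 2 ≤ p) (hpn : p + 2 ≤ n) :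
    ((n.choose p : ℚ))⁻¹ ≤ 2 / (n * (n - 1)) := by
  have hle : n.choose 2 ≤ n.choose p := choose_le_choose_of_le_of_add_le hp (by omega)
  calc ((n.choose p : ℚ))⁻¹ ≤ ((n.choose 2 : ℚ))⁻¹ := by
        gcongr
        exact_mod_cast choose_pos (by omega)
    _ = 2 / (n * (n - 1)) := by rw [cast_choose_two, inv_div]

/-- The boundary terms are written as indicators so that the sum over `p` can be evaluated
uniformly, including `n = 2`, where `p = 1` and `p = n - 1` coincide. -/
theorem inv_choose_le {n p : ℕ} (hp : 1 ≤ p) (hpn : p + 1 ≤ n) :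
    ((n.choose p : ℚ))⁻¹ ≤
      2 / (n * (n - 1)) + (if p = 1 then (n : ℚ)⁻¹ else 0) +
        (if p = n - 1 then (n : ℚ)⁻¹ else 0) := by
  have hn : (2 : ℚ) ≤ n := by exact_mod_cast (by omega : 2 ≤ n)
  have hmid : (0 : ℚ) ≤ 2 / (n * (n - 1)) := by
    apply div_nonneg <;> nlinarith
  have hend : (0 : ℚ) ≤ (n : ℚ)⁻¹ := by positivity
  split_ifs with h1 h2 h2
  · subst h1
    simp only [choose_one_right]
    linarith
  · subst h1
    simp only [choose_one_right]
    linarith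
  · rw [h2, choose_symm (by omega), choose_one_right]
    linarith
  · have := inv_choose_le_of_two_le (n := n) (p := p) (by omega) (by omega)
    linarith

theorem sum_inv_choose_le {n : ℕ} (hn : 2 ≤ n) :
    ∑ p ∈ Icc 1 (n - 1), ((n.choose p : ℚ))⁻¹ ≤ 4 / n := by
  refine (sum_le_sum fun p hp => inv_choose_le (mem_Icc.mp hp).1 (by grind)).trans_eq ?_
  rw [sum_add_distrib, sum_add_distrib, sum_const, sum_ite_eq', sum_ite_eq']
  have hn1 : (n : ℚ) - 1 ≠ 0 := by
    rw [sub_ne_zero]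
    exact_mod_cast (by omega : n ≠ 1)
  simp only [card_Icc, add_tsub_cancel_right, nsmul_eq_mul, mem_Icc, le_refl, true_and,
    show 1 ≤ n - 1 by omega, if_true, Nat.cast_sub (by omega : 1 ≤ n), Nat.cast_one]
  field_simp
  ring

theorem Nat.factorial_mul_factorial_eq_mul_inv_choose {K : Type*} [Field K] [CharZero K] {n p : ℕ}
    (hp : p ≤ n) : (p ! * (n - p)! : K) = n ! * (n.choose p : K)⁻¹ := by
  rw [cast_choose K hp, inv_div, mul_div_cancel₀]
  exact_mod_cast (factorial_pos n).ne'

theorem card_decomposable_le (n : ℕ) :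
    (Nat.card {σ : Equiv.Perm (Fin n) // Decomposable n σ} : ℚ) ≤
      n ! * ∑ p ∈ Icc 1 (n - 1), ((n.choose p : ℚ))⁻¹ := by
  rw [mul_sum]
  refine (Nat.cast_le.mpr (card_decomposable_le_sum_factorial n)).trans_eq ?_
  push_cast
  exact sum_congr rfl fun p hp => Nat.factorial_mul_factorial_eq_mul_inv_choose (by grind)

/-- The number `D_n` of decomposable permutations in `S_n` satisfies
`D_n ≤ n! · Σ_{p=1}^{n-1} (binomial(n,p))⁻¹` for every `n ≥ 2`; consequently there
is a constant `C > 0` such that the number `I_n` of indecomposable permutations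
satisfies `I_n ≥ (1 - C/n) · n!` for all `n ≥ 2`. -/
theorem decomposable_count_bound :
    (∀ n : ℕ, 2 ≤ n →
      (Nat.card {σ : Equiv.Perm (Fin n) // Decomposable n σ} : ℚ) ≤
        (n.factorial : ℚ) * ∑ p ∈ Finset.Icc 1 (n - 1), ((n.choose p : ℚ))⁻¹) ∧
    ∃ C : ℚ, 0 < C ∧ ∀ n : ℕ, 2 ≤ n →
      (1 - C / (n : ℚ)) * (n.factorial : ℚ) ≤
        (Nat.card {σ : Equiv.Perm (Fin n) // ¬ Decomposable n σ} : ℚ) := by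
  classical
  refine ⟨fun n _ => card_decomposable_le n, 4, by norm_num, fun n hn => ?_⟩
  have hsplit := Nat.card_congr (Equiv.sumCompl (Decomposable n))
  rw [Nat.card_sum, Nat.card_perm, Nat.card_fin] at hsplit
  calc (1 - 4 / n) * (n ! : ℚ) = (n ! : ℚ) - n ! * (4 / n) := by ring
    _ ≤ (n ! : ℚ) - n ! * ∑ p ∈ Icc 1 (n - 1), ((n.choose p : ℚ))⁻¹ := by
        gcongr
        exact sum_inv_choose_le hn
    _ ≤ (n ! : ℚ) - Nat.card {σ : Equiv.Perm (Fin n) // Decomposable n σ} := by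
        gcongr
        exact card_decomposable_le n
    _ = Nat.card {σ : Equiv.Perm (Fin n) // ¬ Decomposable n σ} := by
        rw [← hsplit]
        push_cast
        ring
end

section
/- For every n ≥ 5 and every k ≥ 2, the Kneser graph KG(T_n) of triangulations of a convex n-gon does not contain the kth power of a Hamiltonian cycle. -/
def IntervalsCross (p q : ℕ × ℕ) : Prop := p.1 < q.1 ∧ q.1 < p.2 ∧ p.2 < q.2

namespace IntervalsCross

/-- The point of `p` charged to it: it lies inside no member of `S` properly nested in `p`,
so distinct pairwise noncrossing intervals are charged distinct points. -/
def innerPoint (S : Finset (ℕ × ℕ)) (p : ℕ × ℕ) : ℕ :=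
  (p.1 + 1) ⊔ (S.filter fun r => r.1 = p.1 ∧ r.2 < p.2).sup Prod.snd

variable {S : Finset (ℕ × ℕ)} {p r : ℕ × ℕ}

lemma innerPoint_mem_Ioo (hp : p.1 + 2 ≤ p.2) : innerPoint S p ∈ Set.Ioo p.1 p.2 := by
  refine ⟨by simp [innerPoint], max_lt (by omega) ((Finset.sup_lt_iff (by simp; omega)).2 ?_)⟩
  intro r hr
  exact (Finset.mem_filter.1 hr).2.2

lemma innerPoint_eq_or_mem (S : Finset (ℕ × ℕ)) (p : ℕ × ℕ) :
    innerPoint S p = p.1 + 1 ∨ (p.1, innerPoint S p) ∈ S := by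
  set F := S.filter fun r => r.1 = p.1 ∧ r.2 < p.2
  rcases F.eq_empty_or_nonempty with hF | hF
  · simp [innerPoint, F, hF]
  obtain ⟨q, hq, hsup⟩ := F.exists_mem_eq_sup hF Prod.snd
  obtain ⟨hqS, hq1, -⟩ := Finset.mem_filter.1 hq
  have hdef : innerPoint S p = (p.1 + 1) ⊔ q.2 := hsup ▸ rfl
  rcases le_total q.2 (p.1 + 1) with h | h
  · left; rw [hdef, sup_eq_left.2 h]
  · right; rwa [hdef, sup_eq_right.2 h, ← hq1]

lemma innerPoint_notMem_Ioo (hS : ∀ p ∈ S, ∀ q ∈ S, ¬ IntervalsCross p q) (hr : r ∈ S)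
    (hrp : r ≠ p) (h1 : p.1 ≤ r.1) (h2 : r.2 ≤ p.2) : innerPoint S p ∉ Set.Ioo r.1 r.2 := by
  rintro ⟨hlt, hgt⟩
  rcases h1.eq_or_lt with h1 | h1
  · have hrmem : r ∈ S.filter fun r => r.1 = p.1 ∧ r.2 < p.2 :=
      Finset.mem_filter.2 ⟨hr, h1.symm, lt_of_le_of_ne h2 fun h => hrp (Prod.ext h1.symm h)⟩
    exact hgt.not_ge ((Finset.le_sup (f := Prod.snd) hrmem).trans le_sup_right)
  · rcases innerPoint_eq_or_mem S p with h | h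
    · omega
    · exact hS _ h r hr ⟨h1, hlt, hgt⟩

lemma nested_of_mem_Ioo (hS : ∀ p ∈ S, ∀ q ∈ S, ¬ IntervalsCross p q) {q : ℕ × ℕ}
    (hp : p ∈ S) (hq : q ∈ S) {x : ℕ} (hxp : x ∈ Set.Ioo p.1 p.2) (hxq : x ∈ Set.Ioo q.1 q.2) :
    (p.1 ≤ q.1 ∧ q.2 ≤ p.2) ∨ (q.1 ≤ p.1 ∧ p.2 ≤ q.2) := by
  have := hS p hp q hq
  have := hS q hq p hp
  simp only [IntervalsCross, Set.mem_Ioo] at *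
  omega

lemma innerPoint_injOn (hS : ∀ p ∈ S, ∀ q ∈ S, ¬ IntervalsCross p q)
    (hlen : ∀ p ∈ S, p.1 + 2 ≤ p.2) : Set.InjOn (innerPoint S) S := by
  intro p hp q hq hpq
  by_contra hne
  have hxp := innerPoint_mem_Ioo (S := S) (hlen p hp)
  have hxq := innerPoint_mem_Ioo (S := S) (hlen q hq)
  rcases nested_of_mem_Ioo hS hp hq hxp (hpq ▸ hxq) with ⟨h1, h2⟩ | ⟨h1, h2⟩
  · exact innerPoint_notMem_Ioo hS hq (Ne.symm hne) h1 h2 (hpq ▸ hxq)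
  · exact innerPoint_notMem_Ioo hS hp hne h1 h2 (hpq ▸ hxp)

end IntervalsCross

open IntervalsCross in
theorem card_le_of_not_intervalsCross {S : Finset (ℕ × ℕ)} {a b : ℕ}
    (hS : ∀ p ∈ S, ∀ q ∈ S, ¬ IntervalsCross p q)
    (hsub : ∀ p ∈ S, a ≤ p.1 ∧ p.1 + 2 ≤ p.2 ∧ p.2 ≤ b) : S.card ≤ b - a - 1 := by
  calc S.card ≤ (Finset.Ioo a b).card := by
        refine Finset.card_le_card_of_injOn (innerPoint S) (fun p hp => ?_)
          (innerPoint_injOn hS fun p hp => (hsub p hp).2.1)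
        have := innerPoint_mem_Ioo (S := S) (hsub p hp).2.1
        have := hsub p hp
        simp only [Set.mem_Ioo, Finset.coe_Ioo] at *
        omega
    _ = b - a - 1 := Nat.card_Ioo a b

theorem card_le_of_not_intervalsCross_of_notMem {S : Finset (ℕ × ℕ)} {a b : ℕ}
    (hS : ∀ p ∈ S, ∀ q ∈ S, ¬ IntervalsCross p q)
    (hsub : ∀ p ∈ S, a ≤ p.1 ∧ p.1 + 2 ≤ p.2 ∧ p.2 ≤ b) (hab : (a, b) ∉ S) :
    S.card ≤ b - a - 2 := by
  rcases S.eq_empty_or_nonempty with rfl | ⟨r, hr⟩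
  · simp
  have hab2 : a + 2 ≤ b := by have := hsub r hr; omega
  have hS' : ∀ p ∈ insert (a, b) S, ∀ q ∈ insert (a, b) S, ¬ IntervalsCross p q := by
    simp only [Finset.mem_insert]
    rintro p (rfl | hp) q (rfl | hq) <;> simp only [IntervalsCross]
    · omega
    · have := hsub q hq; omega
    · have := hsub p hp; omega
    · exact hS p hp q hq
  have := card_le_of_not_intervalsCross hS' (by
    simp only [Finset.mem_insert]
    rintro p (rfl | hp)
    · exact ⟨le_rfl, hab2, le_rfl⟩
    · exact hsub p hp)
  rw [Finset.card_insert_of_notMem hab] at this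
  omega

section Polygon

variable {n : ℕ}

lemma not_ngonCross_of_mem {e f : Sym2 (ZMod n)} {x : ZMod n} (he : x ∈ e) (hf : x ∈ f) :
    ¬ NgonCross n e f := by
  rintro ⟨a, b, c, d, rfl, rfl, ⟨hc, hcb⟩, ⟨hd, hda⟩⟩
  rw [Sym2.mem_iff] at he hf
  rcases he with rfl | rfl <;> rcases hf with rfl | rfl
  · simp at hc
  · exact hda.false
  · exact hcb.false
  · simp at hd

lemma isDiagonal_mk_iff (x y : ZMod n) :
    IsDiagonal n s(x, y) ↔ x - y ≠ 0 ∧ x - y ≠ 1 ∧ x - y ≠ -1 := by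
  refine ⟨fun ⟨i, j, hij, h⟩ => ?_, fun h => ⟨x, y, rfl, h⟩⟩
  rcases Sym2.eq_iff.1 hij with ⟨rfl, rfl⟩ | ⟨rfl, rfl⟩
  · exact h
  · simp only [← neg_sub y x, ne_eq, neg_eq_zero] at h ⊢
    rw [neg_eq_iff_eq_neg, neg_inj]
    exact ⟨h.1, h.2.2, h.2.1⟩

lemma val_natCast_sub_natCast_of_le {p q : ℕ} (hpq : p ≤ q) (hq : q < n) :
    ((q : ZMod n) - p).val = q - p := by
  rw [← Nat.cast_sub hpq, ZMod.val_natCast_of_lt (by omega)]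

lemma val_natCast_sub_natCast_of_lt {p q : ℕ} (hpq : p < q) (hq : q < n) :
    ((p : ZMod n) - q).val = n + p - q := by
  rw [← ZMod.val_natCast_of_lt (n := n) (a := n + p - q) (by omega), Nat.cast_sub (by omega),
    Nat.cast_add, ZMod.natCast_self, zero_add]

lemma isDiagonal_natCast_iff {p q : ℕ} (hpq : p ≤ q) (hq : q < n) :
    IsDiagonal n s((p : ZMod n), q) ↔ 2 ≤ q - p ∧ q - p + 2 ≤ n := by
  rcases Nat.lt_or_ge n 2 with hn | hn
  · obtain rfl : q = p := by omega
    simp [isDiagonal_mk_iff]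
  have : Fact (1 < n) := ⟨hn⟩
  have hval_neg_one : (-1 : ZMod n).val = n - 1 := by
    rw [ZMod.neg_val, if_neg one_ne_zero, ZMod.val_one]
  simp only [isDiagonal_mk_iff, ← neg_sub (q : ZMod n), ne_eq, neg_eq_zero]
  rw [neg_eq_iff_eq_neg, neg_inj, ← (ZMod.val_injective n).eq_iff,
    ← (ZMod.val_injective n).eq_iff, ← (ZMod.val_injective n).eq_iff,
    val_natCast_sub_natCast_of_le hpq hq, ZMod.val_zero, ZMod.val_one, hval_neg_one]
  omega

lemma ngonCross_natCast {p q r s : ℕ} (hpr : p < r) (hrq : r < q) (hqs : q < s) (hs : s < n) :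
    NgonCross n s((p : ZMod n), q) s((r : ZMod n), s) := by
  have hpq := hpr.trans hrq
  refine ⟨p, q, r, s, rfl, rfl, ⟨?_, ?_⟩, ⟨?_, ?_⟩⟩
  · rw [val_natCast_sub_natCast_of_le hpr.le (by omega)]; omega
  · rw [val_natCast_sub_natCast_of_le hpr.le (by omega),
      val_natCast_sub_natCast_of_le hpq.le (by omega)]; omega
  · rw [val_natCast_sub_natCast_of_le hqs.le hs]; omega
  · rw [val_natCast_sub_natCast_of_le hqs.le hs,
      val_natCast_sub_natCast_of_lt hpq (by omega)]; omega

def fan (n : ℕ) : Finset (Sym2 (ZMod n)) :=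
  (Finset.Ico 2 (n - 1)).image fun m : ℕ => s(0, (m : ZMod n))

lemma isTriangulation_fan : IsTriangulation n (fan n) := by
  refine ⟨?_, ?_, ?_⟩
  · rw [fan, Finset.card_image_of_injOn, Nat.card_Ico]
    · omega
    intro m hm m' hm' h
    simp only [Finset.coe_Ico, Set.mem_Ico] at hm hm'
    have := (ZMod.natCast_eq_natCast_iff' m m' n).1 (Sym2.congr_right.1 h)
    rwa [Nat.mod_eq_of_lt (by omega), Nat.mod_eq_of_lt (by omega)] at this
  · simp only [fan, Finset.mem_image, Finset.mem_Ico]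
    rintro _ ⟨m, hm, rfl⟩
    rw [← Nat.cast_zero, isDiagonal_natCast_iff (Nat.zero_le m) (by omega)]
    omega
  · simp only [fan, Finset.mem_image]
    rintro _ ⟨m, -, rfl⟩ _ ⟨m', -, rfl⟩
    exact not_ngonCross_of_mem (Sym2.mem_mk_left _ _) (Sym2.mem_mk_left _ _)

def vertexPair (e : Sym2 (ZMod n)) : ℕ × ℕ :=
  Sym2.lift ⟨fun x y : ZMod n => (min x.val y.val, max x.val y.val),
    fun x y => by simp only [min_comm, max_comm]⟩ e

lemma vertexPair_natCast {p q : ℕ} (hpq : p ≤ q) (hq : q < n) :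
    vertexPair s((p : ZMod n), q) = (p, q) := by
  simp [vertexPair, ZMod.val_natCast_of_lt hq, ZMod.val_natCast_of_lt (hpq.trans_lt hq), hpq]

lemma exists_eq_natCast [NeZero n] (e : Sym2 (ZMod n)) :
    ∃ p q : ℕ, p ≤ q ∧ q < n ∧ e = s((p : ZMod n), q) := by
  induction e using Sym2.ind with | _ x y => ?_
  rcases le_total x.val y.val with h | h
  · exact ⟨x.val, y.val, h, y.val_lt, by simp⟩
  · exact ⟨y.val, x.val, h, x.val_lt, by rw [Sym2.eq_swap]; simp⟩

lemma injOn_vertexPair [NeZero n] (T : Finset (Sym2 (ZMod n))) :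
    Set.InjOn vertexPair (T : Set (Sym2 (ZMod n))) := by
  intro e _ f _ hef
  obtain ⟨p, q, hpq, hq, rfl⟩ := exists_eq_natCast e
  obtain ⟨p', q', hpq', hq', rfl⟩ := exists_eq_natCast f
  rw [vertexPair_natCast hpq hq, vertexPair_natCast hpq' hq', Prod.mk.injEq] at hef
  rw [hef.1, hef.2]

theorem ear_mem_of_disjoint_fan (hn : 4 ≤ n) {T : Finset (Sym2 (ZMod n))}
    (hT : IsTriangulation n T) (hdisj : Disjoint T (fan n)) : s(1, -1) ∈ T := by
  have : NeZero n := ⟨by omega⟩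
  obtain ⟨hcard, hdiag, hnc⟩ := hT
  by_contra hnotin
  have hbounds : ∀ e ∈ T, 1 ≤ (vertexPair e).1 ∧ (vertexPair e).1 + 2 ≤ (vertexPair e).2 ∧
      (vertexPair e).2 ≤ n - 1 := by
    intro e he
    obtain ⟨p, q, hpq, hq, rfl⟩ := exists_eq_natCast e
    have hd := (isDiagonal_natCast_iff hpq hq).1 (hdiag _ he)
    rw [vertexPair_natCast hpq hq]
    refine ⟨Nat.one_le_iff_ne_zero.2 fun hp => ?_, by omega, by omega⟩
    subst hp
    exact Finset.disjoint_left.1 hdisj he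
      (Finset.mem_image.2 ⟨q, Finset.mem_Ico.2 ⟨by omega, by omega⟩, by simp⟩)
  have hear : (1, n - 1) ∉ T.image vertexPair := by
    rintro hmem
    obtain ⟨e, he, hev⟩ := Finset.mem_image.1 hmem
    obtain ⟨p, q, hpq, hq, rfl⟩ := exists_eq_natCast e
    rw [vertexPair_natCast hpq hq, Prod.mk.injEq] at hev
    obtain ⟨rfl, rfl⟩ := hev
    rw [Nat.cast_one, Nat.cast_pred (by omega), ZMod.natCast_self, zero_sub] at he
    exact hnotin he
  have hcross : ∀ P ∈ T.image vertexPair, ∀ Q ∈ T.image vertexPair, ¬ IntervalsCross P Q := by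
    simp only [Finset.mem_image]
    rintro _ ⟨e, he, rfl⟩ _ ⟨f, hf, rfl⟩ hef
    obtain ⟨p, q, hpq, hq, rfl⟩ := exists_eq_natCast e
    obtain ⟨r, s, hrs, hs, rfl⟩ := exists_eq_natCast f
    rw [vertexPair_natCast hpq hq, vertexPair_natCast hrs hs] at hef
    obtain ⟨hpr, hrq, hqs⟩ := hef
    exact hnc _ he _ hf (ngonCross_natCast hpr hrq hqs hs)
  have := card_le_of_not_intervalsCross_of_notMem hcross
    (by simpa only [Finset.forall_mem_image] using hbounds) hear
  rw [Finset.card_image_of_injOn (injOn_vertexPair T)] at this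
  omega

end Polygon

theorem ContainsHamPower.exists_triangle {V : Type*} {G : SimpleGraph V} {k : ℕ}
    (h : ContainsHamPower G k) (hk : 2 ≤ k) (x : V) :
    ∃ y z, G.Adj x y ∧ G.Adj x z ∧ G.Adj y z := by
  obtain ⟨v, hv⟩ := h
  set i := v.symm x
  refine ⟨v (i + (1 : ℕ)), v (i + (2 : ℕ)), ?_, ?_, ?_⟩
  · simpa [i] using hv i 1 le_rfl (by omega)
  · simpa [i] using hv i 2 (by omega) hk
  · have := hv (i + (1 : ℕ)) 1 le_rfl (by omega)
    rwa [add_assoc, ← Nat.cast_add] at this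

/-- For every `n ≥ 5` and every `k ≥ 2`, the Kneser graph of triangulations of a
convex `n`-gon does not contain the `k`-th power of a Hamiltonian cycle. -/
theorem kneser_triangulations_no_ham_power (n k : ℕ) (hn : 5 ≤ n) (hk : 2 ≤ k) :
    ¬ ContainsHamPower (KGTri n) k := by
  let F : Triangulation n := ⟨fan n, isTriangulation_fan⟩
  have hear {T : Triangulation n} (hT : (KGTri n).Adj F T) : s(1, -1) ∈ T.1 :=
    ear_mem_of_disjoint_fan (by omega) T.2 hT.2.symm
  intro h
  obtain ⟨T, T', hT, hT', hTT'⟩ := h.exists_triangle hk F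
  exact Finset.disjoint_left.1 hTT'.2 (hear hT) (hear hT')
end
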